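/- arXiv:math/0602609 — 14 statements merged into one kernel-verified Lean document; each statement's English description precedes it below -/
import Mathlib

section
/- Let J be the ideal of R generated by the union of all the sets M_i (for i = 1,…,r) together with all the sets N_{ij} (for 1 ≤ i < j ≤ r). Then Rad(I) = Rad(J), where I is the ideal of R generated by all 2-minors of the matrix A = (B_1 | B_2 | … | B_r). -/
/-- The set of 2-minors of the 2×i catalecticant matrix with columns
    (x (a-1), x a), a = 1,…,i; i.e. {x_a x_{b+1} − x_{a+1} x_b : 0 ≤ a < b ≤ i−1}. -/
def catMinors {R : Type*} [CommRing R] (x : ℕ → R) (i : ℕ) : Set R :=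
  {f | ∃ a b : ℕ, a < b ∧ b < i ∧ f = x a * x (b + 1) - x (a + 1) * x b}

/-- The mixed 2-minors {x_a y_{b+1} − x_{a+1} y_b : 0 ≤ a ≤ c−1, 0 ≤ b ≤ d−1}. -/
def mixMinors {R : Type*} [CommRing R] (x y : ℕ → R) (c d : ℕ) : Set R :=
  {f | ∃ a b : ℕ, a < c ∧ b < d ∧ f = x a * y (b + 1) - x (a + 1) * y b}

/-- The ideal I_{c,d} generated by all 2-minors of the matrix A_{c,d}. -/
def scrollIdeal {R : Type*} [CommRing R] (x y : ℕ → R) (c d : ℕ) : Ideal R :=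
  Ideal.span (catMinors x c ∪ catMinors y d ∪ mixMinors x y c d)

/-- The ideal J_{i,j} generated by S_i ∪ T_j ∪ {x_0 y_j − x_1 y_{j−1}, x_{i−1} y_1 − x_i y_0}. -/
def Jideal {R : Type*} [CommRing R] (x y : ℕ → R) (i j : ℕ) : Ideal R :=
  Ideal.span (catMinors x i ∪ catMinors y j ∪
    {x 0 * y j - x 1 * y (j - 1), x (i - 1) * y 1 - x i * y 0})

section Field
variable {K : Type*} [Field K]

lemma geom_val {R : Type*} [CommRing R] (u : ℕ → R) (c : ℕ) (l : R)
    (hl : ∀ a < c, u (a + 1) = l * u a) : ∀ a ≤ c, u a = l ^ a * u 0 := by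
  intro a ha
  induction a with
  | zero => simp
  | succ n ih =>
    rw [hl n (by omega), ih (by omega), pow_succ]
    ring

lemma geom_of_hankel (u : ℕ → K) (c : ℕ)
    (Hu : ∀ a b : ℕ, a < b → b < c → u a * u (b + 1) = u (a + 1) * u b) :
    (∀ a < c, u a = 0) ∨ ∃ l : K, ∀ a < c, u (a + 1) = l * u a := by
  by_cases h : ∀ a < c, u a = 0
  · exact Or.inl h
  · push_neg at h
    obtain ⟨t, ht, hut⟩ := h
    refine Or.inr ⟨u (t + 1) / u t, fun a ha => ?_⟩
    have key : u a * u (t + 1) = u (a + 1) * u t := by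
      rcases lt_trichotomy a t with h' | h' | h'
      · exact Hu a t h' ht
      · subst h'; ring
      · have := Hu t a h' ha; linear_combination -this
    rw [div_mul_eq_mul_div, eq_div_iff hut]
    linear_combination -key

lemma key_field (u v : ℕ → K) (c d : ℕ) (hc : 1 ≤ c) (hd : 1 ≤ d)
    (Hu : ∀ a b : ℕ, a < b → b < c → u a * u (b + 1) = u (a + 1) * u b)
    (Hv : ∀ a b : ℕ, a < b → b < d → v a * v (b + 1) = v (a + 1) * v b)
    (N1 : u 0 * v d = u 1 * v (d - 1))
    (N2 : u (c - 1) * v 1 = u c * v 0)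
    (a b : ℕ) (ha : a < c) (hb : b < d) :
    u a * v (b + 1) = u (a + 1) * v b := by
  rcases geom_of_hankel u c Hu with hu0 | ⟨l, hl⟩
  · -- u a = 0 for a < c
    rw [hu0 a ha, zero_mul]
    by_cases hac : a + 1 < c
    · rw [hu0 _ hac, zero_mul]
    · have hac' : a + 1 = c := by omega
      -- need u c * v b = 0
      have h2 : u c * v 0 = 0 := by
        rw [← N2, hu0 (c - 1) (by omega), zero_mul]
      rcases mul_eq_zero.mp h2 with h | h
      · rw [hac', h, zero_mul]
      · -- v 0 = 0
        rcases geom_of_hankel v d Hv with hv0 | ⟨m, hm⟩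
        · rw [hv0 b hb, mul_zero]
        · have : v b = 0 := by
            rw [geom_val v d m hm b (by omega), h, mul_zero]
          rw [this, mul_zero]
  · rcases geom_of_hankel v d Hv with hv0 | ⟨m, hm⟩
    · -- v b = 0 for b < d
      rw [hv0 b hb, mul_zero]
      by_cases hbd : b + 1 < d
      · rw [hv0 _ hbd, mul_zero]
      · have hbd' : b + 1 = d := by omega
        have h1 : u 0 * v d = 0 := by
          rw [N1, hv0 (d - 1) (by omega), mul_zero]
        rcases mul_eq_zero.mp h1 with h | h
        · have : u a = 0 := by
            rw [geom_val u c l hl a (by omega), h, mul_zero]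
          rw [this, zero_mul]
        · rw [hbd', h, mul_zero]
    · -- both geometric
      rw [hm b hb, hl a ha]
      by_cases hml : m = l
      · subst hml; ring
      · -- (m - l) * u 0 * v (d-1) = 0 and (m - l) * u (c-1) * v 0 = 0
        have e1 : (m - l) * (u 0 * v (d - 1)) = 0 := by
          have hvd : v d = m * v (d - 1) := by
            have h := hm (d - 1) (by omega)
            rwa [show d - 1 + 1 = d by omega] at h
          have hu1 : u 1 = l * u 0 := hl 0 (by omega)
          linear_combination N1 - hvd * u 0 + v (d-1) * hu1
        have e2 : (m - l) * (u (c - 1) * v 0) = 0 := by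
          have huc : u c = l * u (c - 1) := by
            have h := hl (c - 1) (by omega)
            rwa [show c - 1 + 1 = c by omega] at h
          have hv1 : v 1 = m * v 0 := hm 0 (by omega)
          linear_combination N2 - u (c-1) * hv1 + v 0 * huc
        have hml' : m - l ≠ 0 := sub_ne_zero.mpr hml
        have h1 : u 0 * v (d - 1) = 0 := by
          rcases mul_eq_zero.mp e1 with h | h
          · exact absurd h hml'
          · exact h
        have h2 : u (c - 1) * v 0 = 0 := by
          rcases mul_eq_zero.mp e2 with h | h
          · exact absurd h hml'
          · exact h
        -- show u a * v b = 0
        suffices hs : u a * v b = 0 by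
          rw [show u a * (m * v b) = m * (u a * v b) by ring, hs, mul_zero,
            show l * u a * v b = l * (u a * v b) by ring, hs, mul_zero]
        by_cases hu0 : u 0 = 0
        · rw [geom_val u c l hl a (by omega), hu0, mul_zero, zero_mul]
        by_cases hv0 : v 0 = 0
        · rw [geom_val v d m hm b (by omega), hv0, mul_zero, mul_zero]
        exfalso
        have huc1 : u (c - 1) = 0 := by
          rcases mul_eq_zero.mp h2 with h | h
          · exact h
          · exact absurd h hv0
        have hvd1 : v (d - 1) = 0 := by
          rcases mul_eq_zero.mp h1 with h | h
          · exact absurd h hu0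
          · exact h
        have hlc : l ^ (c - 1) = 0 := by
          have := geom_val u c l hl (c - 1) (by omega)
          rw [huc1] at this
          rcases mul_eq_zero.mp this.symm with h | h
          · exact h
          · exact absurd h hu0
        have hmd : m ^ (d - 1) = 0 := by
          have := geom_val v d m hm (d - 1) (by omega)
          rw [hvd1] at this
          rcases mul_eq_zero.mp this.symm with h | h
          · exact h
          · exact absurd h hv0
        have hl0 : l = 0 := by
          by_cases hc1 : c - 1 = 0
          · rw [hc1, pow_zero] at hlc; exact absurd hlc one_ne_zero
          · exact pow_eq_zero_iff hc1 |>.mp hlc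
        have hm0 : m = 0 := by
          by_cases hd1 : d - 1 = 0
          · rw [hd1, pow_zero] at hmd; exact absurd hmd one_ne_zero
          · exact pow_eq_zero_iff hd1 |>.mp hmd
        exact hml (hm0.trans hl0.symm)

end Field

lemma key_prime {R : Type*} [CommRing R] (P : Ideal R) (hP : P.IsPrime)
    (u v : ℕ → R) (c d : ℕ) (hc : 1 ≤ c) (hd : 1 ≤ d)
    (Hu : ∀ a b : ℕ, a < b → b < c → u a * u (b + 1) - u (a + 1) * u b ∈ P)
    (Hv : ∀ a b : ℕ, a < b → b < d → v a * v (b + 1) - v (a + 1) * v b ∈ P)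
    (N1 : u 0 * v d - u 1 * v (d - 1) ∈ P)
    (N2 : u (c - 1) * v 1 - u c * v 0 ∈ P)
    (a b : ℕ) (ha : a < c) (hb : b < d) :
    u a * v (b + 1) - u (a + 1) * v b ∈ P := by
  haveI := hP
  let D := R ⧸ P
  let K := FractionRing D
  let φ : R →+* K := (algebraMap D K).comp (Ideal.Quotient.mk P)
  have hmem : ∀ g : R, g ∈ P ↔ φ g = 0 := by
    intro g
    rw [show φ g = algebraMap D K (Ideal.Quotient.mk P g) from rfl,
      map_eq_zero_iff (algebraMap D K) (IsFractionRing.injective D K),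
      Ideal.Quotient.eq_zero_iff_mem]
  rw [hmem]
  have step : ∀ p q s t : R, p * q - s * t ∈ P ↔ φ p * φ q = φ s * φ t := by
    intro p q s t
    rw [hmem, map_sub, map_mul, map_mul, sub_eq_zero]
  rw [map_sub, map_mul, map_mul, sub_eq_zero]
  exact key_field (φ ∘ u) (φ ∘ v) c d hc hd
    (fun a b h1 h2 => (step _ _ _ _).mp (Hu a b h1 h2))
    (fun a b h1 h2 => (step _ _ _ _).mp (Hv a b h1 h2))
    ((step _ _ _ _).mp N1) ((step _ _ _ _).mp N2) a b ha hb

/-- A rational normal scroll is set-theoretically defined by the 2-minors of the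
    individual blocks together with the two mixed minors N_{ij} for each pair of blocks. -/
theorem scroll_radical_eq_of_blocks {R : Type*} [CommRing R] (r : ℕ) (hr : 1 ≤ r)
    (c : Fin r → ℕ) (hc : ∀ i, 1 ≤ c i) (x : Fin r → ℕ → R) :
    (Ideal.span {f : R | ∃ (i j : Fin r) (a b : ℕ), a < c i ∧ b < c j ∧
        (i < j ∨ (i = j ∧ a < b)) ∧ f = x i a * x j (b + 1) - x i (a + 1) * x j b}).radical =
      (Ideal.span ((⋃ i : Fin r, catMinors (x i) (c i)) ∪
        {f : R | ∃ i j : Fin r, i < j ∧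
          (f = x i 0 * x j (c j) - x i 1 * x j (c j - 1) ∨
           f = x i (c i - 1) * x j 1 - x i (c i) * x j 0)})).radical := by
  set Jset : Set R := (⋃ i : Fin r, catMinors (x i) (c i)) ∪
        {f : R | ∃ i j : Fin r, i < j ∧
          (f = x i 0 * x j (c j) - x i 1 * x j (c j - 1) ∨
           f = x i (c i - 1) * x j 1 - x i (c i) * x j 0)} with hJset
  apply le_antisymm
  · -- rad I ≤ rad J
    rw [Ideal.radical_le_radical_iff]
    rw [Ideal.span_le]
    rintro f ⟨i, j, a, b, hai, hbj, hij, rfl⟩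
    rcases hij with hij | ⟨rfl, hab⟩
    · rw [Ideal.radical_eq_sInf]
      refine Ideal.mem_sInf.mpr ?_
      rintro P ⟨hJP, hPprime⟩
      refine key_prime P hPprime (x i) (x j) (c i) (c j) (hc i) (hc j) ?_ ?_ ?_ ?_ a b hai hbj
      · intro a b h1 h2
        exact hJP (Ideal.subset_span (Or.inl (Set.mem_iUnion.mpr ⟨i, a, b, h1, h2, rfl⟩)))
      · intro a b h1 h2
        exact hJP (Ideal.subset_span (Or.inl (Set.mem_iUnion.mpr ⟨j, a, b, h1, h2, rfl⟩)))
      · exact hJP (Ideal.subset_span (Or.inr ⟨i, j, hij, Or.inl rfl⟩))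
      · exact hJP (Ideal.subset_span (Or.inr ⟨i, j, hij, Or.inr rfl⟩))
    · exact Ideal.le_radical
        (Ideal.subset_span (Or.inl (Set.mem_iUnion.mpr ⟨i, a, b, hab, hbj, rfl⟩)))
  · -- rad J ≤ rad I
    apply Ideal.radical_mono
    apply Ideal.span_mono
    rintro f (hf | hf)
    · obtain ⟨S, ⟨i, rfl⟩, hfS⟩ := hf
      obtain ⟨a, b, hab, hb, rfl⟩ := hfS
      exact ⟨i, i, a, b, by omega, hb, Or.inr ⟨rfl, hab⟩, rfl⟩
    · obtain ⟨i, j, hij, h | h⟩ := hf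
      · refine ⟨i, j, 0, c j - 1, ?_, ?_, Or.inl hij, ?_⟩
        · have := hc i; omega
        · have := hc j; omega
        · rw [show c j - 1 + 1 = c j by have := hc j; omega]; exact h
      · refine ⟨i, j, c i - 1, 0, ?_, ?_, Or.inl hij, ?_⟩
        · have := hc i; omega
        · have := hc j; omega
        · rw [show c i - 1 + 1 = c i by have := hc i; omega]; exact h
end

section
/- Rad(I_{c,d}) = Rad(J_{c,d}). -/
section Aux

variable {K : Type*} [CommRing K] [IsDomain K]

/-- Trichotomy for a catalecticant sequence in a domain. -/
private lemma tri_aux (c : ℕ) (u : ℕ → K)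
    (hu : ∀ a b, a < b → b < c + 1 → u a * u (b + 1) = u (a + 1) * u b) :
    (∀ i, i ≤ c + 1 → u i ≠ 0) ∨ (∀ i, 1 ≤ i → i ≤ c + 1 → u i = 0) ∨
      (∀ i, i ≤ c → u i = 0) := by
  by_cases hex : ∃ k, 1 ≤ k ∧ k ≤ c ∧ u k ≠ 0
  · left
    obtain ⟨k, hk1, hkc, hk⟩ := hex
    have step : ∀ j, 1 ≤ j → j ≤ c → u j ≠ 0 → u (j - 1) ≠ 0 ∧ u (j + 1) ≠ 0 := by
      intro j h1 h2 hj
      have h := hu (j - 1) j (by omega) (by omega)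
      rw [show j - 1 + 1 = j by omega] at h
      constructor
      · intro hz
        rw [hz, zero_mul] at h
        exact hj (mul_self_eq_zero.mp h.symm)
      · intro hz
        rw [hz, mul_zero] at h
        exact hj (mul_self_eq_zero.mp h.symm)
    have up : ∀ m, k + m ≤ c + 1 → u (k + m) ≠ 0 := by
      intro m
      induction m with
      | zero => intro _; simpa using hk
      | succ n ih =>
        intro hle
        have h1 : u (k + n) ≠ 0 := ih (by omega)
        have := (step (k + n) (by omega) (by omega) h1).2
        rwa [show k + n + 1 = k + (n + 1) by omega] at this
    have down : ∀ m, m ≤ k → u (k - m) ≠ 0 := by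
      intro m
      induction m with
      | zero => intro _; simpa using hk
      | succ n ih =>
        intro hle
        have h1 : u (k - n) ≠ 0 := ih (by omega)
        have := (step (k - n) (by omega) (by omega) h1).1
        rwa [show k - n - 1 = k - (n + 1) by omega] at this
    intro i hi
    rcases le_or_gt i k with h | h
    · have := down (k - i) (by omega)
      rwa [show k - (k - i) = i by omega] at this
    · have := up (i - k) (by omega)
      rwa [show k + (i - k) = i by omega] at this
  · push_neg at hex
    by_cases h0 : u 0 = 0
    · right; right
      intro i hi
      rcases Nat.eq_zero_or_pos i with rfl | hp
      · exact h0
      · exact hex i hp hi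
    by_cases htop : u (c + 1) = 0
    · right; left
      intro i h1 h2
      rcases Nat.lt_or_ge i (c + 1) with h | h
      · exact hex i h1 (by omega)
      · rw [show i = c + 1 by omega]; exact htop
    rcases Nat.eq_zero_or_pos c with rfl | hcpos
    · left
      intro i hi
      interval_cases i
      · exact h0
      · exact htop
    · exfalso
      have h := hu 0 c hcpos (by omega)
      have h1 : u 1 = 0 := hex 1 le_rfl hcpos
      rw [h1, zero_mul] at h
      rcases mul_eq_zero.mp h with h' | h'
      · exact h0 h'
      · exact htop h'

/-- The key domain lemma: all mixed minors vanish. -/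
private lemma key_lemma (c d : ℕ) (u v : ℕ → K)
    (hu : ∀ a b, a < b → b < c + 1 → u a * u (b + 1) = u (a + 1) * u b)
    (hv : ∀ a b, a < b → b < d + 1 → v a * v (b + 1) = v (a + 1) * v b)
    (h3 : u 0 * v (d + 1) = u 1 * v d)
    (h4 : u c * v 1 = u (c + 1) * v 0)
    (a b : ℕ) (ha : a ≤ c) (hb : b ≤ d) :
    u a * v (b + 1) = u (a + 1) * v b := by
  have L1 : u a * u 1 = u (a + 1) * u 0 := by
    rcases Nat.eq_zero_or_pos a with rfl | hp
    · ring
    · linear_combination -(hu 0 a hp (by omega))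
  have L2 : v b * v (d + 1) = v (b + 1) * v d := by
    rcases eq_or_lt_of_le hb with rfl | h
    · ring
    · exact hv b d h (by omega)
  have L3 : u a * u (c + 1) = u (a + 1) * u c := by
    rcases eq_or_lt_of_le ha with rfl | h
    · ring
    · exact hu a c h (by omega)
  have L4 : v (b + 1) * v 0 = v b * v 1 := by
    rcases Nat.eq_zero_or_pos b with rfl | hp
    · ring
    · linear_combination hv 0 b hp (by omega)
  have hA1 : (u a * v (b + 1) - u (a + 1) * v b) * (u 1 * v d) = 0 := by
    linear_combination (v (b + 1) * v d) * L1 - (u (a + 1) * u 0) * L2 +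
      (u (a + 1) * v b) * h3
  have hA2 : (u a * v (b + 1) - u (a + 1) * v b) * (u 0 * v (d + 1)) = 0 := by
    linear_combination hA1 + (u a * v (b + 1) - u (a + 1) * v b) * h3
  have hA3 : (u a * v (b + 1) - u (a + 1) * v b) * (u 0 * v d) = 0 := by
    linear_combination (v b * v d) * L1 - (u a * u 0) * L2 + (u a * v b) * h3
  have hA4 : (u a * v (b + 1) - u (a + 1) * v b) * (u (c + 1) * v 0) = 0 := by
    linear_combination (v (b + 1) * v 0) * L3 + (u (a + 1) * u c) * L4 +
      (u (a + 1) * v b) * h4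
  rw [← sub_eq_zero]
  rcases tri_aux c u hu with Au | Bu | Cu <;> rcases tri_aux d v hv with Av | Bv | Cv
  · -- all u ≠ 0, all v ≠ 0
    exact (mul_eq_zero.mp hA1).resolve_right
      (mul_ne_zero (Au 1 (by omega)) (Av d (by omega)))
  · -- all u ≠ 0, v vanishes above 0
    by_cases hv0 : v 0 = 0
    · have hb1 : v (b + 1) = 0 := Bv (b + 1) (by omega) (by omega)
      have hbb : v b = 0 := by
        rcases Nat.eq_zero_or_pos b with rfl | hp
        · exact hv0
        · exact Bv b hp (by omega)
      rw [hb1, hbb]; ring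
    · exact (mul_eq_zero.mp hA4).resolve_right
        (mul_ne_zero (Au (c + 1) le_rfl) hv0)
  · -- all u ≠ 0, v vanishes below d+1
    by_cases hvd : v (d + 1) = 0
    · have hbb : v b = 0 := Cv b hb
      have hb1 : v (b + 1) = 0 := by
        rcases eq_or_lt_of_le hb with rfl | h
        · exact hvd
        · exact Cv (b + 1) (by omega)
      rw [hb1, hbb]; ring
    · exact (mul_eq_zero.mp hA2).resolve_right
        (mul_ne_zero (Au 0 (by omega)) hvd)
  · -- u vanishes above 0, all v ≠ 0
    by_cases hu0 : u 0 = 0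
    · have ha1 : u (a + 1) = 0 := Bu (a + 1) (by omega) (by omega)
      have haa : u a = 0 := by
        rcases Nat.eq_zero_or_pos a with rfl | hp
        · exact hu0
        · exact Bu a hp (by omega)
      rw [ha1, haa]; ring
    · exact (mul_eq_zero.mp hA3).resolve_right
        (mul_ne_zero hu0 (Av d (by omega)))
  · -- Bu Bv
    have ha1 : u (a + 1) = 0 := Bu (a + 1) (by omega) (by omega)
    have hb1 : v (b + 1) = 0 := Bv (b + 1) (by omega) (by omega)
    rw [ha1, hb1]; ring
  · -- Bu Cv
    have ha1 : u (a + 1) = 0 := Bu (a + 1) (by omega) (by omega)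
    rcases Nat.eq_zero_or_pos a with rfl | hp
    · rcases eq_or_lt_of_le hb with rfl | h
      · rw [sub_eq_zero]; exact h3
      · have hb1 : v (b + 1) = 0 := Cv (b + 1) (by omega)
        rw [ha1, hb1]; ring
    · have haa : u a = 0 := Bu a hp (by omega)
      rw [ha1, haa]; ring
  · -- Cu Av
    by_cases hut : u (c + 1) = 0
    · have haa : u a = 0 := Cu a ha
      have ha1 : u (a + 1) = 0 := by
        rcases eq_or_lt_of_le ha with rfl | h
        · exact hut
        · exact Cu (a + 1) (by omega)
      rw [haa, ha1]; ring
    · exact (mul_eq_zero.mp hA4).resolve_right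
        (mul_ne_zero hut (Av 0 (by omega)))
  · -- Cu Bv
    have haa : u a = 0 := Cu a ha
    rcases Nat.eq_zero_or_pos b with rfl | hp
    · rcases eq_or_lt_of_le ha with rfl | h
      · rw [sub_eq_zero]; exact h4
      · have ha1 : u (a + 1) = 0 := Cu (a + 1) (by omega)
        rw [haa, ha1]; ring
    · have hbb : v b = 0 := Bv b hp (by omega)
      rw [haa, hbb]; ring
  · -- Cu Cv
    rw [Cu a ha, Cv b hb]; ring

end Aux

/-- Rad(I_{c,d}) = Rad(J_{c,d}). -/
theorem radical_scroll_eq_radical_J {R : Type*} [CommRing R] (c d : ℕ)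
    (hc : 1 ≤ c) (hd : 1 ≤ d) (x y : ℕ → R) :
    (scrollIdeal x y c d).radical = (Jideal x y c d).radical := by
  obtain ⟨c, rfl⟩ : ∃ c', c = c' + 1 := ⟨c - 1, by omega⟩
  obtain ⟨d, rfl⟩ : ∃ d', d = d' + 1 := ⟨d - 1, by omega⟩
  apply le_antisymm
  · have hle : scrollIdeal x y (c + 1) (d + 1) ≤ (Jideal x y (c + 1) (d + 1)).radical := by
      rw [scrollIdeal, Ideal.span_le]
      rintro f hf
      rcases hf with hf | hf
      · exact Ideal.le_radical (Ideal.subset_span (Or.inl hf))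
      · obtain ⟨a, b, haa, hbb, rfl⟩ := hf
        rw [Ideal.radical_eq_sInf]
        refine Submodule.mem_sInf.mpr ?_
        rintro P ⟨hJP, hP⟩
        haveI := hP
        have hgen : ∀ g, g ∈ (catMinors x (c + 1) ∪ catMinors y (d + 1) ∪
            {x 0 * y (d + 1) - x 1 * y ((d + 1) - 1),
              x ((c + 1) - 1) * y 1 - x (c + 1) * y 0} : Set R) →
            Ideal.Quotient.mk P g = 0 := fun g hg =>
          Ideal.Quotient.eq_zero_iff_mem.mpr (hJP (Ideal.subset_span hg))
        have key := key_lemma c d (fun i => Ideal.Quotient.mk P (x i))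
          (fun i => Ideal.Quotient.mk P (y i)) ?_ ?_ ?_ ?_ a b (by omega) (by omega)
        · rw [← Ideal.Quotient.eq_zero_iff_mem, map_sub, map_mul, map_mul, sub_eq_zero]
          exact key
        · intro α β h1 h2
          have h := hgen _ (Or.inl (Or.inl ⟨α, β, h1, h2, rfl⟩))
          rw [map_sub, map_mul, map_mul, sub_eq_zero] at h
          exact h
        · intro α β h1 h2
          have h := hgen _ (Or.inl (Or.inr ⟨α, β, h1, h2, rfl⟩))
          rw [map_sub, map_mul, map_mul, sub_eq_zero] at h
          exact h
        · have h := hgen _ (Or.inr (Set.mem_insert _ _))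
          rw [show (d + 1) - 1 = d from rfl, map_sub, map_mul, map_mul, sub_eq_zero] at h
          exact h
        · have h := hgen _ (Or.inr (Set.mem_insert_of_mem _ rfl))
          rw [show (c + 1) - 1 = c from rfl, map_sub, map_mul, map_mul, sub_eq_zero] at h
          exact h
    calc (scrollIdeal x y (c + 1) (d + 1)).radical
        ≤ ((Jideal x y (c + 1) (d + 1)).radical).radical := Ideal.radical_mono hle
      _ = (Jideal x y (c + 1) (d + 1)).radical := Ideal.radical_idem _
  · apply Ideal.radical_mono
    rw [Jideal, Ideal.span_le]
    rintro f hf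
    rcases hf with hf | hf
    · exact Ideal.subset_span (Or.inl hf)
    · rcases hf with rfl | rfl
      · exact Ideal.subset_span (Or.inr ⟨0, d, by omega, by omega, by norm_num⟩)
      · exact Ideal.subset_span (Or.inr ⟨c, 0, by omega, by omega, by norm_num⟩)
end

section
/- I_{c,d} ⊆ Rad(J_{c,d}). -/
section Aux

variable {A : Type*} [CommRing A] [IsDomain A]

/-- Forward zero propagation along a Hankel sequence in a domain. -/
lemma hankel_zero_up (c : ℕ) (x : ℕ → A)
    (hx : ∀ s t : ℕ, s < t → t < c → x s * x (t + 1) = x (s + 1) * x t) :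
    ∀ k i, i + k < c → x i = 0 → x (i + k) = 0 := by
  intro k
  induction k with
  | zero => intro i _ h; simpa using h
  | succ k ih =>
      intro i hik h0
      have hz : x (i + k) = 0 := ih i (by omega) h0
      have hm := hx (i + k) (i + k + 1) (by omega) (by omega)
      have hsq : x (i + k + 1) * x (i + k + 1) = 0 := by rw [← hm, hz, zero_mul]
      have h1 : x (i + k + 1) = 0 := mul_self_eq_zero.mp hsq
      rw [show i + (k + 1) = i + k + 1 from by omega]
      exact h1

/-- Backward zero propagation along a Hankel sequence in a domain (down to index 1). -/
lemma hankel_zero_down (c : ℕ) (x : ℕ → A)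
    (hx : ∀ s t : ℕ, s < t → t < c → x s * x (t + 1) = x (s + 1) * x t) :
    ∀ k t, 1 ≤ t → t + k ≤ c → x (t + k) = 0 → x t = 0 := by
  intro k
  induction k with
  | zero => intro t _ _ h; simpa using h
  | succ k ih =>
      intro t ht htk h0
      have h0' : x (t + k + 1) = 0 := by
        rwa [show t + (k + 1) = t + k + 1 from by omega] at h0
      have hm := hx (t + k - 1) (t + k) (by omega) (by omega)
      rw [show t + k - 1 + 1 = t + k from by omega] at hm
      have hsq : x (t + k) * x (t + k) = 0 := by rw [← hm, h0', mul_zero]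
      exact ih t ht (by omega) (mul_self_eq_zero.mp hsq)

lemma claimA (c d : ℕ) (hc : 1 ≤ c) (hd : 1 ≤ d) (x y : ℕ → A)
    (hx : ∀ s t : ℕ, s < t → t < c → x s * x (t + 1) = x (s + 1) * x t)
    (hy : ∀ s t : ℕ, s < t → t < d → y s * y (t + 1) = y (s + 1) * y t)
    (h1 : x 0 * y d = x 1 * y (d - 1))
    (a b : ℕ) (ha : a < c) (hb : b < d)
    (hX : ∀ t, 1 ≤ t → t ≤ a → x t ≠ 0)
    (hY : ∀ t, b + 1 ≤ t → t ≤ d - 1 → y t ≠ 0) :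
    x a * y (b + 1) = x (a + 1) * y b := by
  have A1 : ∀ k t, t + k = d - 1 → b ≤ t → x 0 * y (t + 1) = x 1 * y t := by
    intro k
    induction k with
    | zero =>
        intro t ht _
        have e : t + 1 = d := by omega
        have e2 : t = d - 1 := by omega
        rw [e, e2]; exact h1
    | succ k ih =>
        intro t ht hbt
        have ih' := ih (t + 1) (by omega) (by omega)
        have hyt := hy t (t + 1) (by omega) (by omega)
        have hne : y (t + 1) ≠ 0 := hY (t + 1) (by omega) (by omega)
        have hkey : y (t + 1) * (x 0 * y (t + 1) - x 1 * y t) = 0 := by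
          linear_combination y t * ih' - x 0 * hyt
        exact sub_eq_zero.mp ((mul_eq_zero.mp hkey).resolve_left hne)
  have A1b : x 0 * y (b + 1) = x 1 * y b := A1 (d - 1 - b) b (by omega) le_rfl
  have A2 : ∀ s, s ≤ a → x s * y (b + 1) = x (s + 1) * y b := by
    intro s
    induction s with
    | zero => intro _; simpa using A1b
    | succ s ih =>
        intro hs
        have ih' := ih (by omega)
        have hxs := hx s (s + 1) (by omega) (by omega)
        have hne : x (s + 1) ≠ 0 := hX (s + 1) (by omega) hs
        have hkey : x (s + 1) * (x (s + 1) * y (b + 1) - x (s + 1 + 1) * y b) = 0 := by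
          linear_combination x (s + 2) * ih' - y (b + 1) * hxs
        exact sub_eq_zero.mp ((mul_eq_zero.mp hkey).resolve_left hne)
  exact A2 a le_rfl

lemma claimB (c d : ℕ) (hc : 1 ≤ c) (hd : 1 ≤ d) (x y : ℕ → A)
    (hx : ∀ s t : ℕ, s < t → t < c → x s * x (t + 1) = x (s + 1) * x t)
    (hy : ∀ s t : ℕ, s < t → t < d → y s * y (t + 1) = y (s + 1) * y t)
    (h2 : x (c - 1) * y 1 = x c * y 0)
    (a b : ℕ) (ha : a < c) (hb : b < d)
    (hX : ∀ t, a + 1 ≤ t → t ≤ c - 1 → x t ≠ 0)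
    (hY : ∀ t, 1 ≤ t → t ≤ b → y t ≠ 0) :
    x a * y (b + 1) = x (a + 1) * y b := by
  have B1 : ∀ k s, s + k = c - 1 → a ≤ s → x s * y 1 = x (s + 1) * y 0 := by
    intro k
    induction k with
    | zero =>
        intro s hs _
        have e : s = c - 1 := by omega
        subst e
        rw [show c - 1 + 1 = c from by omega]
        exact h2
    | succ k ih =>
        intro s hs has
        have ih' := ih (s + 1) (by omega) (by omega)
        have hxs := hx s (s + 1) (by omega) (by omega)
        have hne : x (s + 1) ≠ 0 := hX (s + 1) (by omega) (by omega)
        have hkey : x (s + 1) * (x s * y 1 - x (s + 1) * y 0) = 0 := by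
          linear_combination x s * ih' + y 0 * hxs
        exact sub_eq_zero.mp ((mul_eq_zero.mp hkey).resolve_left hne)
  have B1b : x a * y 1 = x (a + 1) * y 0 := B1 (c - 1 - a) a (by omega) le_rfl
  have B2 : ∀ t, t ≤ b → x a * y (t + 1) = x (a + 1) * y t := by
    intro t
    induction t with
    | zero => intro _; simpa using B1b
    | succ t ih =>
        intro htb
        have ih' := ih (by omega)
        have hyt := hy t (t + 1) (by omega) (by omega)
        have hne : y (t + 1) ≠ 0 := hY (t + 1) (by omega) htb
        have hkey : y (t + 1) * (x a * y (t + 1 + 1) - x (a + 1) * y (t + 1)) = 0 := by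
          linear_combination y (t + 2) * ih' + x (a + 1) * hyt
        exact sub_eq_zero.mp ((mul_eq_zero.mp hkey).resolve_left hne)
  exact B2 b le_rfl

/-- The key domain lemma: in a domain, the Hankel relations together with the two corner
    mixed minors force all mixed minors to vanish. -/
lemma keyLemma (c d : ℕ) (hc : 1 ≤ c) (hd : 1 ≤ d) (x y : ℕ → A)
    (hx : ∀ s t : ℕ, s < t → t < c → x s * x (t + 1) = x (s + 1) * x t)
    (hy : ∀ s t : ℕ, s < t → t < d → y s * y (t + 1) = y (s + 1) * y t)
    (h1 : x 0 * y d = x 1 * y (d - 1))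
    (h2 : x (c - 1) * y 1 = x c * y 0)
    (a b : ℕ) (ha : a < c) (hb : b < d) :
    x a * y (b + 1) = x (a + 1) * y b := by
  by_contra hm
  have hA : (∃ i, 1 ≤ i ∧ i ≤ a ∧ x i = 0) ∨ (∃ j, b + 1 ≤ j ∧ j ≤ d - 1 ∧ y j = 0) := by
    by_contra h
    push_neg at h
    exact hm (claimA c d hc hd x y hx hy h1 a b ha hb h.1 h.2)
  have hB : (∃ i, a + 1 ≤ i ∧ i ≤ c - 1 ∧ x i = 0) ∨ (∃ j, 1 ≤ j ∧ j ≤ b ∧ y j = 0) := by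
    by_contra h
    push_neg at h
    exact hm (claimB c d hc hd x y hx hy h2 a b ha hb h.1 h.2)
  rcases hA with ⟨i, hi1, hi2, hxi⟩ | ⟨j, hj1, hj2, hyj⟩ <;>
    rcases hB with ⟨k, hk1, hk2, hxk⟩ | ⟨l, hl1, hl2, hyl⟩
  · -- x i = 0 (i ≤ a), x k = 0 (a+1 ≤ k ≤ c-1)
    have hxa : x a = 0 := by
      have := hankel_zero_up c x hx (a - i) i (by omega) hxi
      rwa [show i + (a - i) = a from by omega] at this
    have hxa1 : x (a + 1) = 0 :=
      hankel_zero_down c x hx (k - (a + 1)) (a + 1) (by omega) (by omega)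
        (by rwa [show a + 1 + (k - (a + 1)) = k from by omega])
    exact hm (by rw [hxa, hxa1, zero_mul, zero_mul])
  · -- x i = 0 (i ≤ a), y l = 0 (l ≤ b)
    have hxa : x a = 0 := by
      have := hankel_zero_up c x hx (a - i) i (by omega) hxi
      rwa [show i + (a - i) = a from by omega] at this
    have hyb : y b = 0 := by
      have := hankel_zero_up d y hy (b - l) l (by omega) hyl
      rwa [show l + (b - l) = b from by omega] at this
    exact hm (by rw [hxa, hyb, zero_mul, mul_zero])
  · -- y j = 0 (b+1 ≤ j ≤ d-1), x k = 0 (a+1 ≤ k ≤ c-1)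
    have hyb1 : y (b + 1) = 0 :=
      hankel_zero_down d y hy (j - (b + 1)) (b + 1) (by omega) (by omega)
        (by rwa [show b + 1 + (j - (b + 1)) = j from by omega])
    have hxa1 : x (a + 1) = 0 :=
      hankel_zero_down c x hx (k - (a + 1)) (a + 1) (by omega) (by omega)
        (by rwa [show a + 1 + (k - (a + 1)) = k from by omega])
    exact hm (by rw [hyb1, hxa1, mul_zero, zero_mul])
  · -- y j = 0 (b+1 ≤ j ≤ d-1), y l = 0 (l ≤ b)
    have hyb1 : y (b + 1) = 0 :=
      hankel_zero_down d y hy (j - (b + 1)) (b + 1) (by omega) (by omega)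
        (by rwa [show b + 1 + (j - (b + 1)) = j from by omega])
    have hyb : y b = 0 := by
      have := hankel_zero_up d y hy (b - l) l (by omega) hyl
      rwa [show l + (b - l) = b from by omega] at this
    exact hm (by rw [hyb1, hyb, mul_zero, mul_zero])

end Aux

/-- I_{c,d} ⊆ Rad(J_{c,d}). -/
theorem scroll_le_radical_J {R : Type*} [CommRing R] (c d : ℕ)
    (hc : 1 ≤ c) (hd : 1 ≤ d) (x y : ℕ → R) :
    scrollIdeal x y c d ≤ (Jideal x y c d).radical := by
  rw [scrollIdeal, Ideal.span_le]
  intro f hf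
  rcases hf with (hf | hf) | hf
  · exact Ideal.le_radical
      (Ideal.subset_span (Set.mem_union_left _ (Set.mem_union_left _ hf)))
  · exact Ideal.le_radical
      (Ideal.subset_span (Set.mem_union_left _ (Set.mem_union_right _ hf)))
  · obtain ⟨a, b, ha, hb, rfl⟩ := hf
    show x a * y (b + 1) - x (a + 1) * y b ∈ (Jideal x y c d).radical
    rw [Ideal.radical_eq_sInf]
    refine Ideal.mem_sInf.mpr ?_
    rintro P ⟨hJP, hP⟩
    haveI := hP
    set q := Ideal.Quotient.mk P with hq
    have hx' : ∀ s t : ℕ, s < t → t < c →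
        q (x s) * q (x (t + 1)) = q (x (s + 1)) * q (x t) := by
      intro s t hst htc
      have hmem : x s * x (t + 1) - x (s + 1) * x t ∈ P :=
        hJP (Ideal.subset_span (Set.mem_union_left _
          (Set.mem_union_left _ ⟨s, t, hst, htc, rfl⟩)))
      have h0 : q (x s * x (t + 1) - x (s + 1) * x t) = 0 :=
        Ideal.Quotient.eq_zero_iff_mem.mpr hmem
      rw [map_sub, map_mul, map_mul] at h0
      exact sub_eq_zero.mp h0
    have hy' : ∀ s t : ℕ, s < t → t < d →
        q (y s) * q (y (t + 1)) = q (y (s + 1)) * q (y t) := by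
      intro s t hst htd
      have hmem : y s * y (t + 1) - y (s + 1) * y t ∈ P :=
        hJP (Ideal.subset_span (Set.mem_union_left _
          (Set.mem_union_right _ ⟨s, t, hst, htd, rfl⟩)))
      have h0 : q (y s * y (t + 1) - y (s + 1) * y t) = 0 :=
        Ideal.Quotient.eq_zero_iff_mem.mpr hmem
      rw [map_sub, map_mul, map_mul] at h0
      exact sub_eq_zero.mp h0
    have h1' : q (x 0) * q (y d) = q (x 1) * q (y (d - 1)) := by
      have hmem : x 0 * y d - x 1 * y (d - 1) ∈ P :=
        hJP (Ideal.subset_span (Set.mem_union_right _ (Set.mem_insert _ _)))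
      have h0 : q (x 0 * y d - x 1 * y (d - 1)) = 0 :=
        Ideal.Quotient.eq_zero_iff_mem.mpr hmem
      rw [map_sub, map_mul, map_mul] at h0
      exact sub_eq_zero.mp h0
    have h2' : q (x (c - 1)) * q (y 1) = q (x c) * q (y 0) := by
      have hmem : x (c - 1) * y 1 - x c * y 0 ∈ P :=
        hJP (Ideal.subset_span (Set.mem_union_right _
          (Set.mem_insert_of_mem _ rfl)))
      have h0 : q (x (c - 1) * y 1 - x c * y 0) = 0 :=
        Ideal.Quotient.eq_zero_iff_mem.mpr hmem
      rw [map_sub, map_mul, map_mul] at h0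
      exact sub_eq_zero.mp h0
    have hgoal : q (x a) * q (y (b + 1)) = q (x (a + 1)) * q (y b) :=
      keyLemma c d hc hd (fun n => q (x n)) (fun n => q (y n)) hx' hy' h1' h2' a b ha hb
    refine Ideal.Quotient.eq_zero_iff_mem.mp ?_
    rw [map_sub, map_mul, map_mul]
    exact sub_eq_zero.mpr hgoal
end

section
/- For all i with 2 ≤ i ≤ c, the element x_1^{i−1} (x_0 y_1 − x_1 y_0)^{i−1} belongs to the ideal J_{i,d}. -/
lemma minor_mem_span {R : Type*} [CommRing R] (x : ℕ → R) {i a b : ℕ}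
    (hab : a < b) (hbi : b < i) :
    x a * x (b + 1) - x (a + 1) * x b ∈ Ideal.span (catMinors x i) :=
  Ideal.subset_span ⟨a, b, hab, hbi, rfl⟩

lemma catMinors_mono {R : Type*} [CommRing R] (x : ℕ → R) {i j : ℕ} (h : i ≤ j) :
    catMinors x i ⊆ catMinors x j := by
  rintro f ⟨a, b, hab, hbi, rfl⟩
  exact ⟨a, b, hab, lt_of_lt_of_le hbi h, rfl⟩

lemma aux_mem_span {R : Type*} [CommRing R] (x y : ℕ → R) :
    ∀ k : ℕ, 1 ≤ k →
    x 1 ^ k * (x 0 * y 1 - x 1 * y 0) ^ k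
      - x 0 ^ k * (x k * y 1 - x (k + 1) * y 0) * (x 0 * y 1 - x 1 * y 0) ^ (k - 1)
      ∈ Ideal.span (catMinors x (k + 1)) := by
  intro k hk
  induction k with
  | zero => omega
  | succ n ih =>
    rcases Nat.lt_or_ge n 1 with h | h
    · interval_cases n
      have h1 := minor_mem_span x (i := 2) (a := 0) (b := 1) (by omega) (by omega)
      have hm := Ideal.mul_mem_left (Ideal.span (catMinors x 2)) (y 0) h1
      convert hm using 1
      ring
    · obtain ⟨m, rfl⟩ : ∃ m, n = m + 1 := ⟨n - 1, by omega⟩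
      have hA : x 1 ^ (m + 1) * (x 0 * y 1 - x 1 * y 0) ^ (m + 1)
          - x 0 ^ (m + 1) * (x (m + 1) * y 1 - x (m + 1 + 1) * y 0)
            * (x 0 * y 1 - x 1 * y 0) ^ (m + 1 - 1)
          ∈ Ideal.span (catMinors x (m + 1 + 1 + 1)) :=
        Ideal.span_mono (catMinors_mono x (by omega)) (ih h)
      simp only [Nat.add_sub_cancel] at hA ⊢
      have h1 := minor_mem_span x (i := m + 1 + 1 + 1) (a := 0) (b := m + 1)
        (by omega) (by omega)
      have h2 := minor_mem_span x (i := m + 1 + 1 + 1) (a := 0) (b := m + 2)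
        (by omega) (by omega)
      have hmem := Ideal.add_mem _
        (Ideal.mul_mem_left _ (x 1 * (x 0 * y 1 - x 1 * y 0)) hA)
        (Ideal.sub_mem _
          (Ideal.mul_mem_left _
            (x 0 ^ (m + 1) * (x 0 * y 1 - x 1 * y 0) ^ (m + 1) * y 0) h2)
          (Ideal.mul_mem_left _
            (x 0 ^ (m + 1) * (x 0 * y 1 - x 1 * y 0) ^ (m + 1) * y 1) h1))
      convert hmem using 1
      ring

/-- For 2 ≤ i ≤ c, x_1^{i−1} (x_0 y_1 − x_1 y_0)^{i−1} ∈ J_{i,d}. -/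
theorem pow_mem_J {R : Type*} [CommRing R] (c d : ℕ) (hc : 1 ≤ c) (hd : 1 ≤ d)
    (x y : ℕ → R) (i : ℕ) (hi2 : 2 ≤ i) (hic : i ≤ c) :
    x 1 ^ (i - 1) * (x 0 * y 1 - x 1 * y 0) ^ (i - 1) ∈ Jideal x y i d := by
  obtain ⟨m, rfl⟩ : ∃ m, i = m + 2 := ⟨i - 2, by omega⟩
  have h1 : m + 2 - 1 = m + 1 := by omega
  rw [h1]
  have hA := aux_mem_span x y (m + 1) (by omega)
  simp only [Nat.add_sub_cancel] at hA
  have hsub : Ideal.span (catMinors x (m + 1 + 1)) ≤ Jideal x y (m + 2) d := by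
    apply Ideal.span_mono
    intro f hf
    exact Or.inl (Or.inl hf)
  have hg : x (m + 2 - 1) * y 1 - x (m + 2) * y 0 ∈ Jideal x y (m + 2) d :=
    Ideal.subset_span (Or.inr (Set.mem_insert_iff.mpr (Or.inr rfl)))
  rw [h1] at hg
  have hmem := Ideal.add_mem _ (hsub hA)
    (Ideal.mul_mem_left _ (x 0 ^ (m + 1) * (x 0 * y 1 - x 1 * y 0) ^ m) hg)
  convert hmem using 1
  ring
end

section
/- For all i with 3 ≤ i ≤ c, the element x_1 (x_0 y_1 − x_1 y_0)(x_{i−2} y_1 − x_{i−1} y_0) belongs to the ideal J_{i,d}. -/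
/-- For 3 ≤ i ≤ c, x_1 (x_0 y_1 − x_1 y_0)(x_{i−2} y_1 − x_{i−1} y_0) ∈ J_{i,d}. -/
theorem prod_mem_J {R : Type*} [CommRing R] (c d : ℕ) (hc : 1 ≤ c) (hd : 1 ≤ d)
    (x y : ℕ → R) (i : ℕ) (hi3 : 3 ≤ i) (hic : i ≤ c) :
    x 1 * (x 0 * y 1 - x 1 * y 0) * (x (i - 2) * y 1 - x (i - 1) * y 0) ∈ Jideal x y i d := by
  obtain ⟨n, rfl⟩ : ∃ n, i = n + 3 := ⟨i - 3, by omega⟩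
  have hx : ∀ a b : ℕ, a < b → b < n + 3 →
      x a * x (b + 1) - x (a + 1) * x b ∈ Jideal x y (n + 3) d := by
    intro a b hab hb
    exact Ideal.subset_span (Or.inl (Or.inl ⟨a, b, hab, hb, rfl⟩))
  have m1 := hx 0 1 (by omega) (by omega)
  have m2 := hx 0 (n + 1) (by omega) (by omega)
  have m3 := hx 1 (n + 2) (by omega) (by omega)
  have m5 := hx 0 (n + 2) (by omega) (by omega)
  have g : x (n + 2) * y 1 - x (n + 3) * y 0 ∈ Jideal x y (n + 3) d := by
    refine Ideal.subset_span (Or.inr ?_)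
    right
    simp [show n + 3 - 1 = n + 2 from rfl]
  have h : x 1 * (x 0 * y 1 - x 1 * y 0) * (x (n + 3 - 2) * y 1 - x (n + 3 - 1) * y 0)
      = (-(x (n + 2)) * y 0 ^ 2) * (x 0 * x (1 + 1) - x (0 + 1) * x 1)
      + (x 1 * y 0 * y 1 - x 0 * y 1 ^ 2) * (x 0 * x (n + 1 + 1) - x (0 + 1) * x (n + 1))
      + (-(x 0) * y 0 ^ 2) * (x 1 * x (n + 2 + 1) - x (1 + 1) * x (n + 2))
      + (x 0 * y 0 * y 1) * (x 0 * x (n + 2 + 1) - x (0 + 1) * x (n + 2))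
      + (x 0 ^ 2 * y 1 - x 0 * x 1 * y 0) * (x (n + 2) * y 1 - x (n + 3) * y 0) := by
    simp only [show n + 3 - 2 = n + 1 from rfl, show n + 3 - 1 = n + 2 from rfl,
      show n + 1 + 1 = n + 2 from rfl, show n + 2 + 1 = n + 3 from rfl]
    ring
  rw [h]
  exact add_mem (add_mem (add_mem (add_mem (Ideal.mul_mem_left _ _ m1)
    (Ideal.mul_mem_left _ _ m2)) (Ideal.mul_mem_left _ _ m3))
    (Ideal.mul_mem_left _ _ m5)) (Ideal.mul_mem_left _ _ g)
end

section
/- For all i with 3 ≤ i ≤ c, the ideal product relation x_1 (x_0 y_1 − x_1 y_0) · J_{i−1,d} ⊆ J_{i,d} holds, i.e. for every element f of J_{i−1,d} the element x_1 (x_0 y_1 − x_1 y_0) f belongs to J_{i,d}. -/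
/-- For 3 ≤ i ≤ c, x_1 (x_0 y_1 − x_1 y_0) · J_{i−1,d} ⊆ J_{i,d}. -/
theorem mul_J_le_J {R : Type*} [CommRing R] (c d : ℕ) (hc : 1 ≤ c) (hd : 1 ≤ d)
    (x y : ℕ → R) (i : ℕ) (hi3 : 3 ≤ i) (hic : i ≤ c) :
    ∀ f ∈ Jideal x y (i - 1) d, x 1 * (x 0 * y 1 - x 1 * y 0) * f ∈ Jideal x y i d := by
  obtain ⟨k, rfl⟩ : ∃ k, i = k + 3 := ⟨i - 3, by omega⟩
  intro f hf
  unfold Jideal at hf ⊢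
  refine Submodule.span_induction ?_ ?_ ?_ ?_ hf
  · intro g hg
    rcases hg with (⟨a, b, hab, hb, rfl⟩ | hy) | hpair
    · -- x-minor of J_{i-1,d}, also a generator of J_{i,d}
      refine Ideal.mul_mem_left _ _ (Ideal.subset_span ?_)
      exact Or.inl (Or.inl ⟨a, b, hab, by omega, rfl⟩)
    · -- y-minor
      exact Ideal.mul_mem_left _ _ (Ideal.subset_span (Or.inl (Or.inr hy)))
    · rcases hpair with h1 | h2
      · -- g = x 0 * y d - x 1 * y (d-1), same generator in J_{i,d}
        subst h1
        exact Ideal.mul_mem_left _ _ (Ideal.subset_span (Or.inr (Set.mem_insert _ _)))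
      · -- g = x (k+1) * y 1 - x (k+2) * y 0
        rw [Set.mem_singleton_iff] at h2
        subst h2
        have hv : x (k + 2) * y 1 - x (k + 3) * y 0 ∈
            Ideal.span (catMinors x (k + 3) ∪ catMinors y d ∪
              {x 0 * y d - x 1 * y (d - 1), x (k + 3 - 1) * y 1 - x (k + 3) * y 0}) :=
          Ideal.subset_span (Or.inr (Set.mem_insert_of_mem _ (Set.mem_singleton _)))
        have hm1 : x 0 * x (k + 2) - x 1 * x (k + 1) ∈
            Ideal.span (catMinors x (k + 3) ∪ catMinors y d ∪
              {x 0 * y d - x 1 * y (d - 1), x (k + 3 - 1) * y 1 - x (k + 3) * y 0}) :=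
          Ideal.subset_span (Or.inl (Or.inl ⟨0, k + 1, by omega, by omega, rfl⟩))
        have hm2 : x 0 * x (k + 3) - x 1 * x (k + 2) ∈
            Ideal.span (catMinors x (k + 3) ∪ catMinors y d ∪
              {x 0 * y d - x 1 * y (d - 1), x (k + 3 - 1) * y 1 - x (k + 3) * y 0}) :=
          Ideal.subset_span (Or.inl (Or.inl ⟨0, k + 2, by omega, by omega, rfl⟩))
        have key : x 1 * (x 0 * y 1 - x 1 * y 0) *
              (x (k + 1) * y 1 - x (k + 2) * y 0)
            = ((x 0 * y 1 - x 1 * y 0) * x 0) * (x (k + 2) * y 1 - x (k + 3) * y 0)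
              - ((x 0 * y 1 - x 1 * y 0) * y 1) * (x 0 * x (k + 2) - x 1 * x (k + 1))
              + ((x 0 * y 1 - x 1 * y 0) * y 0) * (x 0 * x (k + 3) - x 1 * x (k + 2)) := by
          ring
        rw [show x (k + 3 - 1 - 1) * y 1 - x (k + 3 - 1) * y 0
              = x (k + 1) * y 1 - x (k + 2) * y 0 from rfl, key]
        exact add_mem (sub_mem (Ideal.mul_mem_left _ _ hv) (Ideal.mul_mem_left _ _ hm1))
          (Ideal.mul_mem_left _ _ hm2)
  · simp
  · intro a b _ _ ha hb
    rw [mul_add]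
    exact add_mem ha hb
  · intro r a _ ha
    rw [smul_eq_mul, show x 1 * (x 0 * y 1 - x 1 * y 0) * (r * a)
          = r * (x 1 * (x 0 * y 1 - x 1 * y 0) * a) by ring]
    exact Ideal.mul_mem_left _ _ ha
end

section
/- For all j with 2 ≤ j ≤ d, J_{c,j−1} ⊆ Rad(J_{c,j}). -/
section Aux

variable {R : Type*} [CommRing R] (x y : ℕ → R) (m n : ℕ)

/-- Mixed 2-minor `G a t = x a * y (t+1) - x (a+1) * y t`. -/
def Gmix (x y : ℕ → R) (a t : ℕ) : R := x a * y (t + 1) - x (a + 1) * y t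

lemma xm_mem (α β : ℕ) (hα : α < m + 1) (hβ : β < m + 1) :
    x α * x (β + 1) - x (α + 1) * x β ∈ Jideal x y (m + 1) (n + 2) := by
  rcases lt_trichotomy α β with h | h | h
  · exact Ideal.subset_span (Or.inl (Or.inl ⟨α, β, h, hβ, rfl⟩))
  · subst h
    have : x α * x (α + 1) - x (α + 1) * x α = 0 := by ring
    rw [this]; exact zero_mem _
  · have hmem : x β * x (α + 1) - x (β + 1) * x α ∈ Jideal x y (m + 1) (n + 2) :=
      Ideal.subset_span (Or.inl (Or.inl ⟨β, α, h, hα, rfl⟩))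
    have : x α * x (β + 1) - x (α + 1) * x β
        = -(x β * x (α + 1) - x (β + 1) * x α) := by ring
    rw [this]; exact neg_mem hmem

lemma ym_mem (α β : ℕ) (hα : α < n + 2) (hβ : β < n + 2) :
    y α * y (β + 1) - y (α + 1) * y β ∈ Jideal x y (m + 1) (n + 2) := by
  rcases lt_trichotomy α β with h | h | h
  · exact Ideal.subset_span (Or.inl (Or.inr ⟨α, β, h, hβ, rfl⟩))
  · subst h
    have : y α * y (α + 1) - y (α + 1) * y α = 0 := by ring
    rw [this]; exact zero_mem _
  · have hmem : y β * y (α + 1) - y (β + 1) * y α ∈ Jideal x y (m + 1) (n + 2) :=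
      Ideal.subset_span (Or.inl (Or.inr ⟨β, α, h, hα, rfl⟩))
    have : y α * y (β + 1) - y (α + 1) * y β
        = -(y β * y (α + 1) - y (β + 1) * y α) := by ring
    rw [this]; exact neg_mem hmem

lemma f_mem : Gmix x y 0 (n + 1) ∈ Jideal x y (m + 1) (n + 2) := by
  refine Ideal.subset_span (Or.inr ?_)
  left
  show Gmix x y 0 (n + 1) = x 0 * y (n + 2) - x 1 * y (n + 2 - 1)
  rfl

lemma h_mem : Gmix x y m 0 ∈ Jideal x y (m + 1) (n + 2) := by
  refine Ideal.subset_span (Or.inr ?_)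
  right
  show Gmix x y m 0 = x (m + 1 - 1) * y 1 - x (m + 1) * y 0
  rfl

/-- Step A : (x 0 * y (n+1)) * g ∈ J. -/
lemma stepA : (x 0 * y (n + 1)) * Gmix x y 0 n ∈ Jideal x y (m + 1) (n + 2) := by
  have h1 := ym_mem x y m n n (n + 1) (by omega) (by omega)
  have h2 := f_mem x y m n
  have hid : (x 0 * y (n + 1)) * Gmix x y 0 n
      = (-(x 0 * x 0)) * (y n * y (n + 1 + 1) - y (n + 1) * y (n + 1))
        + (x 0 * y n) * Gmix x y 0 (n + 1) := by
    simp only [Gmix]; ring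
  rw [hid]
  exact add_mem (Ideal.mul_mem_left _ _ h1) (Ideal.mul_mem_left _ _ h2)

/-- Powers of g reduce: g^(k+1) ≡ (-(x1 yn))^k g mod J. -/
lemma powP : ∀ k : ℕ, (Gmix x y 0 n) ^ (k + 1) - (-(x 1 * y n)) ^ k * Gmix x y 0 n
    ∈ Jideal x y (m + 1) (n + 2) := by
  intro k
  induction k with
  | zero =>
      have : (Gmix x y 0 n) ^ (0 + 1) - (-(x 1 * y n)) ^ 0 * Gmix x y 0 n = 0 := by ring
      rw [this]; exact zero_mem _
  | succ k ih =>
      have hA := stepA x y m n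
      have hid : (Gmix x y 0 n) ^ (k + 1 + 1) - (-(x 1 * y n)) ^ (k + 1) * Gmix x y 0 n
          = Gmix x y 0 n * ((Gmix x y 0 n) ^ (k + 1) - (-(x 1 * y n)) ^ k * Gmix x y 0 n)
            + (-(x 1 * y n)) ^ k * ((x 0 * y (n + 1)) * Gmix x y 0 n) := by
        simp only [Gmix]; ring
      rw [hid]
      exact add_mem (Ideal.mul_mem_left _ _ ih) (Ideal.mul_mem_left _ _ hA)

/-- x-side shift: x1 * G a n ≡ x0 * G (a+1) n mod J. -/
lemma Lx (a : ℕ) (ha : a + 1 ≤ m) :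
    x 1 * Gmix x y a n - x 0 * Gmix x y (a + 1) n ∈ Jideal x y (m + 1) (n + 2) := by
  have h1 := xm_mem x y m n a 0 (by omega) (by omega)
  have h2 := xm_mem x y m n (a + 1) 0 (by omega) (by omega)
  have hid : x 1 * Gmix x y a n - x 0 * Gmix x y (a + 1) n
      = y (n + 1) * (x a * x (0 + 1) - x (a + 1) * x 0)
        - y n * (x (a + 1) * x (0 + 1) - x (a + 1 + 1) * x 0) := by
    simp only [Gmix]; ring
  rw [hid]
  exact sub_mem (Ideal.mul_mem_left _ _ h1) (Ideal.mul_mem_left _ _ h2)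

/-- x-chain: (-(x1 yn))^a g ≡ (-(x0 yn))^a G a n. -/
lemma chainB : ∀ a : ℕ, a ≤ m →
    (-(x 1 * y n)) ^ a * Gmix x y 0 n - (-(x 0 * y n)) ^ a * Gmix x y a n
      ∈ Jideal x y (m + 1) (n + 2) := by
  intro a
  induction a with
  | zero =>
      intro _
      have : (-(x 1 * y n)) ^ 0 * Gmix x y 0 n - (-(x 0 * y n)) ^ 0 * Gmix x y 0 n = 0 := by
        ring
      rw [this]; exact zero_mem _
  | succ a ih =>
      intro ha
      have ih' := ih (by omega)
      have hL := Lx x y m n a ha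
      have hid : (-(x 1 * y n)) ^ (a + 1) * Gmix x y 0 n
            - (-(x 0 * y n)) ^ (a + 1) * Gmix x y (a + 1) n
          = (-(x 1 * y n)) * ((-(x 1 * y n)) ^ a * Gmix x y 0 n
              - (-(x 0 * y n)) ^ a * Gmix x y a n)
            + (-(x 0 * y n)) ^ a * ((-(y n))
              * (x 1 * Gmix x y a n - x 0 * Gmix x y (a + 1) n)) := by
        ring
      rw [hid]
      exact add_mem (Ideal.mul_mem_left _ _ ih')
        (Ideal.mul_mem_left _ _ (Ideal.mul_mem_left _ _ hL))

/-- y-side shift: yn * G m (s+1) ≡ y(n+1) * G m s mod J. -/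
lemma Ly (s : ℕ) (hs : s ≤ n) :
    y n * Gmix x y m (s + 1) - y (n + 1) * Gmix x y m s ∈ Jideal x y (m + 1) (n + 2) := by
  have h1 := ym_mem x y m n (s + 1) n (by omega) (by omega)
  have h2 := ym_mem x y m n s n (by omega) (by omega)
  have hid : y n * Gmix x y m (s + 1) - y (n + 1) * Gmix x y m s
      = (-(x m)) * (y (s + 1) * y (n + 1) - y (s + 1 + 1) * y n)
        + x (m + 1) * (y s * y (n + 1) - y (s + 1) * y n) := by
    simp only [Gmix]; ring
  rw [hid]
  exact add_mem (Ideal.mul_mem_left _ _ h1) (Ideal.mul_mem_left _ _ h2)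

/-- y-chain: (-(x1 yn))^t G m n ≡ (-(x1 y(n+1)))^t G m s when t + s = n. -/
lemma chainC : ∀ t s : ℕ, t + s = n →
    (-(x 1 * y n)) ^ t * Gmix x y m n - (-(x 1 * y (n + 1))) ^ t * Gmix x y m s
      ∈ Jideal x y (m + 1) (n + 2) := by
  intro t
  induction t with
  | zero =>
      intro s hs
      have hsn : s = n := by omega
      rw [hsn]
      have : (-(x 1 * y n)) ^ 0 * Gmix x y m n
          - (-(x 1 * y (n + 1))) ^ 0 * Gmix x y m n = 0 := by ring
      rw [this]; exact zero_mem _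
  | succ t ih =>
      intro s hs
      have ih' := ih (s + 1) (by omega)
      have hL := Ly x y m n s (by omega)
      have hid : (-(x 1 * y n)) ^ (t + 1) * Gmix x y m n
            - (-(x 1 * y (n + 1))) ^ (t + 1) * Gmix x y m s
          = (-(x 1 * y n)) * ((-(x 1 * y n)) ^ t * Gmix x y m n
              - (-(x 1 * y (n + 1))) ^ t * Gmix x y m (s + 1))
            + (-(x 1 * y (n + 1))) ^ t * ((-(x 1))
              * (y n * Gmix x y m (s + 1) - y (n + 1) * Gmix x y m s)) := by
        ring
      rw [hid]
      exact add_mem (Ideal.mul_mem_left _ _ ih')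
        (Ideal.mul_mem_left _ _ (Ideal.mul_mem_left _ _ hL))

/-- The key nilpotency: g^(m+n+1) ∈ J. -/
lemma key_pow : (x 0 * y (n + 1) - x 1 * y n) ^ (m + n + 1) ∈ Jideal x y (m + 1) (n + 2) := by
  have hP := powP x y m n (m + n)
  have hB := chainB x y m n m le_rfl
  have hC := chainC x y m n n 0 (by omega)
  have hG : Gmix x y m 0 ∈ Jideal x y (m + 1) (n + 2) := h_mem x y m n
  have hg : x 0 * y (n + 1) - x 1 * y n = Gmix x y 0 n := rfl
  rw [hg]
  have hid : (Gmix x y 0 n) ^ (m + n + 1)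
      = ((Gmix x y 0 n) ^ (m + n + 1) - (-(x 1 * y n)) ^ (m + n) * Gmix x y 0 n)
        + (-(x 1 * y n)) ^ n * ((-(x 1 * y n)) ^ m * Gmix x y 0 n
            - (-(x 0 * y n)) ^ m * Gmix x y m n)
        + (-(x 0 * y n)) ^ m * ((-(x 1 * y n)) ^ n * Gmix x y m n
            - (-(x 1 * y (n + 1))) ^ n * Gmix x y m 0)
        + (-(x 0 * y n)) ^ m * ((-(x 1 * y (n + 1))) ^ n * Gmix x y m 0) := by
    ring
  rw [hid]
  exact add_mem (add_mem (add_mem hP (Ideal.mul_mem_left _ _ hB))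
    (Ideal.mul_mem_left _ _ hC))
    (Ideal.mul_mem_left _ _ (Ideal.mul_mem_left _ _ hG))

end Aux

/-- For 2 ≤ j ≤ d, J_{c,j−1} ⊆ Rad(J_{c,j}). -/
theorem J_le_radical_J {R : Type*} [CommRing R] (c d : ℕ) (hc : 1 ≤ c) (hd : 1 ≤ d)
    (x y : ℕ → R) (j : ℕ) (hj2 : 2 ≤ j) (hjd : j ≤ d) :
    Jideal x y c (j - 1) ≤ (Jideal x y c j).radical := by
  obtain ⟨n, rfl⟩ : ∃ n, j = n + 2 := ⟨j - 2, by omega⟩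
  obtain ⟨m, rfl⟩ : ∃ m, c = m + 1 := ⟨c - 1, by omega⟩
  rw [Jideal, Ideal.span_le]
  rintro z ((hz | hz) | hz)
  · -- x-minors
    exact Ideal.le_radical (Ideal.subset_span (Or.inl (Or.inl hz)))
  · -- y-minors of the smaller matrix
    obtain ⟨a, b, hab, hb, rfl⟩ := hz
    exact Ideal.le_radical (Ideal.subset_span (Or.inl (Or.inr ⟨a, b, hab, by omega, rfl⟩)))
  · rcases hz with hz | hz
    · -- the interesting generator g
      rw [hz]
      show x 0 * y (n + 2 - 1) - x 1 * y (n + 2 - 1 - 1) ∈ (Jideal x y (m + 1) (n + 2)).radical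
      rw [Ideal.mem_radical_iff]
      refine ⟨m + n + 1, ?_⟩
      have : x 0 * y (n + 2 - 1) - x 1 * y (n + 2 - 1 - 1)
          = x 0 * y (n + 1) - x 1 * y n := by norm_num
      rw [this]
      exact key_pow x y m n
    · -- the generator x_{c-1} y_1 - x_c y_0, also a generator of J_{c,j}
      rw [Set.mem_singleton_iff] at hz
      rw [hz]
      exact Ideal.le_radical (Ideal.subset_span (Or.inr (Set.mem_insert_of_mem _ rfl)))
end

section
/- For all j with 2 ≤ j ≤ d, the element x_0 y_{j−1} − x_1 y_{j−2} belongs to Rad(J_{c,j}). -/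
/-- Chain lemma: modulo the catalecticant minors, `x 1 ^ k ≡ x 0 ^ (k-1) * x k`. -/
lemma chain_mem {R : Type*} [CommRing R] (x : ℕ → R) (c : ℕ) :
    ∀ k, 1 ≤ k → k ≤ c → x 1 ^ k - x 0 ^ (k - 1) * x k ∈ Ideal.span (catMinors x c) := by
  intro k
  induction k with
  | zero => omega
  | succ n ih =>
    intro _ hkc
    rcases Nat.eq_or_lt_of_le (show 1 ≤ n + 1 from Nat.le_add_left 1 n) with h1 | h1
    · have : n = 0 := by omega
      subst this
      simp
    · have hn1 : 1 ≤ n := by omega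
      have hnc : n ≤ c := by omega
      have hm : x 0 * x (n + 1) - x 1 * x n ∈ Ideal.span (catMinors x c) :=
        Ideal.subset_span ⟨0, n, by omega, by omega, rfl⟩
      obtain ⟨m, rfl⟩ : ∃ m, n = m + 1 := ⟨n - 1, by omega⟩
      simp only [show m + 1 - 1 = m from rfl, show m + 1 + 1 - 1 = m + 1 from rfl] at ih ⊢
      have key : x 1 ^ (m + 1 + 1) - x 0 ^ (m + 1) * x (m + 1 + 1) =
          x 1 * (x 1 ^ (m + 1) - x 0 ^ m * x (m + 1))
            - x 0 ^ m * (x 0 * x (m + 1 + 1) - x 1 * x (m + 1)) := by ring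
      rw [key]
      exact sub_mem (Ideal.mul_mem_left _ _ (ih hn1 hnc)) (Ideal.mul_mem_left _ _ hm)

/-- If `p * (p - q) ∈ I` then `(p-q)^(k+1) ≡ (-q)^k * (p-q) mod I`. -/
lemma pow_step {R : Type*} [CommRing R] (I : Ideal R) (p q : R) (hp : p * (p - q) ∈ I) :
    ∀ k, (p - q) ^ (k + 1) - (-q) ^ k * (p - q) ∈ I := by
  intro k
  induction k with
  | zero => simp
  | succ n ih =>
    have key : (p - q) ^ (n + 2) - (-q) ^ (n + 1) * (p - q) =
        (p - q) * ((p - q) ^ (n + 1) - (-q) ^ n * (p - q))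
          + (-q) ^ n * (p * (p - q)) := by ring
    rw [key]
    exact add_mem (Ideal.mul_mem_left _ _ ih) (Ideal.mul_mem_left _ _ hp)

/-- For 2 ≤ j ≤ d, x_0 y_{j−1} − x_1 y_{j−2} ∈ Rad(J_{c,j}). -/
theorem binom_mem_radical_J {R : Type*} [CommRing R] (c d : ℕ) (hc : 1 ≤ c) (hd : 1 ≤ d)
    (x y : ℕ → R) (j : ℕ) (hj2 : 2 ≤ j) (hjd : j ≤ d) :
    x 0 * y (j - 1) - x 1 * y (j - 2) ∈ (Jideal x y c j).radical := by
  rw [Ideal.mem_radical_iff]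
  set J := Jideal x y c j with hJ
  have hysub : ∀ a b : ℕ, a < b → b < j →
      y a * y (b + 1) - y (a + 1) * y b ∈ J :=
    fun a b h1 h2 => Ideal.subset_span (Or.inl (Or.inr ⟨a, b, h1, h2, rfl⟩))
  have hg : x 0 * y j - x 1 * y (j - 1) ∈ J :=
    Ideal.subset_span (Or.inr (by left; rfl))
  have hh : x (c - 1) * y 1 - x c * y 0 ∈ J :=
    Ideal.subset_span (Or.inr (by right; rfl))
  rcases Nat.lt_or_ge j 3 with hj3 | hj3
  · -- j = 2 case
    have : j = 2 := by omega
    subst this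
    simp only [show (2 - 1 : ℕ) = 1 from rfl, show (2 - 2 : ℕ) = 0 from rfl] at *
    set u := x 0 * y 1 - x 1 * y 0 with hu
    -- p * u ∈ J
    have hm1 : y 0 * y 2 - y 1 * y 1 ∈ J := hysub 0 1 (by omega) (by omega)
    have hpu : (x 0 * y 1) * u ∈ J := by
      have key : (x 0 * y 1) * u =
          (x 0 * y 0) * (x 0 * y 2 - x 1 * y 1) - (x 0 * x 0) * (y 0 * y 2 - y 1 * y 1) := by
        rw [hu]; ring
      rw [key]
      exact sub_mem (Ideal.mul_mem_left _ _ hg) (Ideal.mul_mem_left _ _ hm1)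
    -- q^(c-1) * u ∈ J
    have hqu : (x 1 * y 0) ^ (c - 1) * u ∈ J := by
      rcases Nat.eq_or_lt_of_le hc with h1 | h1
      · -- c = 1 : u is the generator h itself
        have hc1 : c = 1 := by omega
        subst hc1
        simpa [hu] using hh
      · -- c ≥ 2
        have hc2 : 2 ≤ c := h1
        have hA : x 1 ^ (c - 1) - x 0 ^ (c - 2) * x (c - 1) ∈ J := by
          refine Ideal.span_mono (fun f hf => Or.inl (Or.inl hf)) ?_
          have := chain_mem x c (c - 1) (by omega) (by omega)
          simpa only [show c - 1 - 1 = c - 2 by omega] using this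
        have hB : x 1 ^ c - x 0 ^ (c - 1) * x c ∈ J := by
          refine Ideal.span_mono (fun f hf => Or.inl (Or.inl hf)) ?_
          exact chain_mem x c c (by omega) le_rfl
        obtain ⟨m, rfl⟩ : ∃ m, c = m + 2 := ⟨c - 2, by omega⟩
        simp only [show m + 2 - 1 = m + 1 by omega, show m + 2 - 2 = m by omega] at hA hB hh ⊢
        have key : (x 1 * y 0) ^ (m + 1) * u =
            (x 1 ^ (m + 1) - x 0 ^ m * x (m + 1)) * (x 0 * y 0 ^ (m + 1) * y 1)
              - (x 1 ^ (m + 2) - x 0 ^ (m + 1) * x (m + 2)) * y 0 ^ (m + 2)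
              + x 0 ^ (m + 1) * y 0 ^ (m + 1) * (x (m + 1) * y 1 - x (m + 2) * y 0) := by
          rw [hu]; ring
        rw [key]
        exact add_mem (sub_mem (Ideal.mul_mem_right _ _ hA) (Ideal.mul_mem_right _ _ hB))
          (Ideal.mul_mem_left _ _ hh)
    refine ⟨c, ?_⟩
    obtain ⟨n, rfl⟩ : ∃ n, c = n + 1 := ⟨c - 1, by omega⟩
    have := pow_step J (x 0 * y 1) (x 1 * y 0) hpu n
    have h2 : (-(x 1 * y 0)) ^ n * u ∈ J := by
      have : (-(x 1 * y 0)) ^ n * u = (-1) ^ n * ((x 1 * y 0) ^ n * u) := by ring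
      rw [this]
      simpa using Ideal.mul_mem_left _ ((-1 : R) ^ n) hqu
    have key : u ^ (n + 1) = (u ^ (n + 1) - (-(x 1 * y 0)) ^ n * u)
        + (-(x 1 * y 0)) ^ n * u := by ring
    rw [key]
    exact add_mem this h2
  · -- j ≥ 3 case: u^2 ∈ J
    obtain ⟨k, rfl⟩ : ∃ k, j = k + 3 := ⟨j - 3, by omega⟩
    refine ⟨2, ?_⟩
    simp only [show k + 3 - 1 = k + 2 by omega, show k + 3 - 2 = k + 1 by omega] at *
    have hm1 : y (k + 1) * y (k + 3) - y (k + 2) * y (k + 2) ∈ J := by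
      have := hysub (k + 1) (k + 2) (by omega) (by omega)
      simpa using this
    have hm2 : y k * y (k + 3) - y (k + 1) * y (k + 2) ∈ J := by
      have := hysub k (k + 2) (by omega) (by omega)
      simpa using this
    have hm3 : y k * y (k + 2) - y (k + 1) * y (k + 1) ∈ J := by
      have := hysub k (k + 1) (by omega) (by omega)
      simpa using this
    have key : (x 0 * y (k + 2) - x 1 * y (k + 1)) ^ 2 =
        (x 0 * y (k + 1) - x 1 * y k) * (x 0 * y (k + 3) - x 1 * y (k + 2))
          - (x 0 * x 0) * (y (k + 1) * y (k + 3) - y (k + 2) * y (k + 2))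
          + (x 0 * x 1) * (y k * y (k + 3) - y (k + 1) * y (k + 2))
          - (x 1 * x 1) * (y k * y (k + 2) - y (k + 1) * y (k + 1)) := by ring
    rw [key]
    exact sub_mem (add_mem (sub_mem (Ideal.mul_mem_left _ _ hg) (Ideal.mul_mem_left _ _ hm1))
      (Ideal.mul_mem_left _ _ hm2)) (Ideal.mul_mem_left _ _ hm3)
end

section
/- For all j with 3 ≤ j ≤ d, the element y_{j−2}(x_0 y_{j−1} − x_1 y_{j−2}) belongs to the ideal J_{c,j}. -/
/-- For 3 ≤ j ≤ d, y_{j−2}(x_0 y_{j−1} − x_1 y_{j−2}) ∈ J_{c,j}. -/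
theorem y_mul_binom_mem_J' {R : Type*} [CommRing R] (c d : ℕ) (hc : 1 ≤ c) (hd : 1 ≤ d)
    (x y : ℕ → R) (j : ℕ) (hj3 : 3 ≤ j) (hjd : j ≤ d) :
    y (j - 2) * (x 0 * y (j - 1) - x 1 * y (j - 2)) ∈ Jideal x y c j := by
  obtain ⟨k, rfl⟩ : ∃ k, j = k + 3 := ⟨j - 3, by omega⟩
  show y (k+1) * (x 0 * y (k+2) - x 1 * y (k+1)) ∈ Jideal x y c (k+3)
  have hgen : x 0 * y (k+3) - x 1 * y (k+2) ∈ Jideal x y c (k+3) :=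
    Ideal.subset_span (Or.inr (Or.inl rfl))
  have hm1 : y k * y (k+3) - y (k+1) * y (k+2) ∈ Jideal x y c (k+3) :=
    Ideal.subset_span (Or.inl (Or.inr ⟨k, k+2, by omega, by omega, by ring_nf⟩))
  have hm2 : y k * y (k+2) - y (k+1) * y (k+1) ∈ Jideal x y c (k+3) :=
    Ideal.subset_span (Or.inl (Or.inr ⟨k, k+1, by omega, by omega, by ring_nf⟩))
  have key : y (k+1) * (x 0 * y (k+2) - x 1 * y (k+1)) =
      y k * (x 0 * y (k+3) - x 1 * y (k+2))
      + (- x 0) * (y k * y (k+3) - y (k+1) * y (k+2))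
      + x 1 * (y k * y (k+2) - y (k+1) * y (k+1)) := by ring
  rw [key]
  exact add_mem (add_mem (Ideal.mul_mem_left _ _ hgen) (Ideal.mul_mem_left _ _ hm1))
    (Ideal.mul_mem_left _ _ hm2)
end

section
/- Suppose c ≥ 2 and d ≥ 2. Then for all i with 1 ≤ i ≤ c−1, the element x_i y_d − x_{i+1} y_{d−1} belongs to Rad(J_{c,d}). -/
section Aux

variable {R : Type*} [CommRing R]

lemma xminor_mem_J (x y : ℕ → R) (i j a b : ℕ) (hab : a < b) (hb : b < i) :
    x a * x (b + 1) - x (a + 1) * x b ∈ Jideal x y i j :=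
  Ideal.subset_span (Or.inl (Or.inl ⟨a, b, hab, hb, rfl⟩))

lemma yminor_mem_J (x y : ℕ → R) (i j a b : ℕ) (hab : a < b) (hb : b < j) :
    y a * y (b + 1) - y (a + 1) * y b ∈ Jideal x y i j :=
  Ideal.subset_span (Or.inl (Or.inr ⟨a, b, hab, hb, rfl⟩))

lemma corner1_mem_J (x y : ℕ → R) (i j : ℕ) :
    x 0 * y j - x 1 * y (j - 1) ∈ Jideal x y i j :=
  Ideal.subset_span (Or.inr (Set.mem_insert _ _))

lemma corner2_mem_J (x y : ℕ → R) (i j : ℕ) :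
    x (i - 1) * y 1 - x i * y 0 ∈ Jideal x y i j :=
  Ideal.subset_span (Or.inr (Set.mem_insert_of_mem _ rfl))

/-- Column induction: M(n, d-1) ∈ Rad J for n ≤ c-2, where c = k+2, d = e+2. -/
lemma colA (x y : ℕ → R) (k e : ℕ) :
    ∀ n, n ≤ k →
      x n * y (e + 2) - x (n + 1) * y (e + 1) ∈ (Jideal x y (k + 2) (e + 2)).radical := by
  intro n
  induction n with
  | zero =>
      intro _
      have h := corner1_mem_J x y (k + 2) (e + 2)
      have he : (e + 2) - 1 = e + 1 := by omega
      rw [he] at h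
      exact Ideal.le_radical h
  | succ n ih =>
      intro hn
      have hIH := ih (by omega)
      apply Ideal.mem_radical_of_pow_mem (m := 2)
      have key : (x (n + 1) * y (e + 2) - x (n + 2) * y (e + 1)) ^ 2 =
          (x n * y (e + 2) - x (n + 1) * y (e + 1)) *
            (x (n + 2) * y (e + 2) - x (n + 3) * y (e + 1))
          - y (e + 2) ^ 2 * (x n * x (n + 2) - x (n + 1) * x (n + 1))
          + y (e + 1) * y (e + 2) * (x n * x (n + 3) - x (n + 1) * x (n + 2))
          - y (e + 1) ^ 2 * (x (n + 1) * x (n + 3) - x (n + 2) * x (n + 2)) := by ring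
      rw [key]
      refine Ideal.sub_mem _ (Ideal.add_mem _ (Ideal.sub_mem _ ?_ ?_) ?_) ?_
      · exact Ideal.mul_mem_right _ _ hIH
      · exact Ideal.le_radical (Ideal.mul_mem_left _ _
          (xminor_mem_J x y _ _ n (n + 1) (by omega) (by omega)))
      · exact Ideal.le_radical (Ideal.mul_mem_left _ _
          (xminor_mem_J x y _ _ n (n + 2) (by omega) (by omega)))
      · exact Ideal.le_radical (Ideal.mul_mem_left _ _
          (xminor_mem_J x y _ _ (n + 1) (n + 2) (by omega) (by omega)))

/-- Row induction: M(c-1, m) ∈ Rad J for m ≤ d-2, where c = k+2, d = e+2. -/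
lemma rowB (x y : ℕ → R) (k e : ℕ) :
    ∀ m, m ≤ e →
      x (k + 1) * y (m + 1) - x (k + 2) * y m ∈ (Jideal x y (k + 2) (e + 2)).radical := by
  intro m
  induction m with
  | zero =>
      intro _
      have h := corner2_mem_J x y (k + 2) (e + 2)
      have hk : (k + 2) - 1 = k + 1 := by omega
      rw [hk] at h
      exact Ideal.le_radical h
  | succ m ih =>
      intro hm
      have hIH := ih (by omega)
      apply Ideal.mem_radical_of_pow_mem (m := 2)
      have key : (x (k + 1) * y (m + 2) - x (k + 2) * y (m + 1)) ^ 2 =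
          (x (k + 1) * y (m + 1) - x (k + 2) * y m) *
            (x (k + 1) * y (m + 3) - x (k + 2) * y (m + 2))
          - x (k + 2) ^ 2 * (y m * y (m + 2) - y (m + 1) * y (m + 1))
          + x (k + 1) * x (k + 2) * (y m * y (m + 3) - y (m + 1) * y (m + 2))
          - x (k + 1) ^ 2 * (y (m + 1) * y (m + 3) - y (m + 2) * y (m + 2)) := by ring
      rw [key]
      refine Ideal.sub_mem _ (Ideal.add_mem _ (Ideal.sub_mem _ ?_ ?_) ?_) ?_
      · exact Ideal.mul_mem_right _ _ hIH
      · exact Ideal.le_radical (Ideal.mul_mem_left _ _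
          (yminor_mem_J x y _ _ m (m + 1) (by omega) (by omega)))
      · exact Ideal.le_radical (Ideal.mul_mem_left _ _
          (yminor_mem_J x y _ _ m (m + 2) (by omega) (by omega)))
      · exact Ideal.le_radical (Ideal.mul_mem_left _ _
          (yminor_mem_J x y _ _ (m + 1) (m + 2) (by omega) (by omega)))

/-- The corner: M(c-1, d-1) ∈ Rad J. -/
lemma cornerC (x y : ℕ → R) (k e : ℕ) :
    x (k + 1) * y (e + 2) - x (k + 2) * y (e + 1) ∈ (Jideal x y (k + 2) (e + 2)).radical := by
  apply Ideal.mem_radical_of_pow_mem (m := 2)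
  have key : (x (k + 1) * y (e + 2) - x (k + 2) * y (e + 1)) ^ 2 =
      x (k + 2) * y (e + 2) * (x k * y (e + 2) - x (k + 1) * y (e + 1))
      - x (k + 2) * y (e + 2) * (x (k + 1) * y (e + 1) - x (k + 2) * y e)
      - y (e + 2) ^ 2 * (x k * x (k + 2) - x (k + 1) * x (k + 1))
      - x (k + 2) ^ 2 * (y e * y (e + 2) - y (e + 1) * y (e + 1)) := by ring
  rw [key]
  refine Ideal.sub_mem _ (Ideal.sub_mem _ (Ideal.sub_mem _ ?_ ?_) ?_) ?_
  · exact Ideal.mul_mem_left _ _ (colA x y k e k le_rfl)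
  · exact Ideal.mul_mem_left _ _ (rowB x y k e e le_rfl)
  · exact Ideal.le_radical (Ideal.mul_mem_left _ _
      (xminor_mem_J x y _ _ k (k + 1) (by omega) (by omega)))
  · exact Ideal.le_radical (Ideal.mul_mem_left _ _
      (yminor_mem_J x y _ _ e (e + 1) (by omega) (by omega)))

end Aux

/-- For c, d ≥ 2, and 1 ≤ i ≤ c−1, x_i y_d − x_{i+1} y_{d−1} ∈ Rad(J_{c,d}). -/
theorem U_mem_radical_J {R : Type*} [CommRing R] (c d : ℕ) (hc : 2 ≤ c) (hd : 2 ≤ d)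
    (x y : ℕ → R) (i : ℕ) (hi1 : 1 ≤ i) (hic : i ≤ c - 1) :
    x i * y d - x (i + 1) * y (d - 1) ∈ (Jideal x y c d).radical := by
  obtain ⟨k, rfl⟩ : ∃ k, c = k + 2 := ⟨c - 2, by omega⟩
  obtain ⟨e, rfl⟩ : ∃ e, d = e + 2 := ⟨d - 2, by omega⟩
  have he : (e + 2) - 1 = e + 1 := by omega
  rw [he]
  rcases Nat.lt_or_ge i (k + 1) with h | h
  · exact colA x y k e i (by omega)
  · have : i = k + 1 := by omega
    subst this
    exact cornerC x y k e
end

section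
/- For all d ≥ 1, the congruences x_0^d y_d^d ≡ x_1^d y_{d−1}^d (mod J_d) and x_d^d y_0^d ≡ x_{d−1}^d y_1^d (mod J_d) hold, i.e. x_0^d y_d^d − x_1^d y_{d−1}^d ∈ J_d and x_d^d y_0^d − x_{d−1}^d y_1^d ∈ J_d. -/
/-- In a commutative ring, if u satisfies the catalecticant relations up to d,
then u_0^{k-1} u_k = u_1^k for 1 ≤ k ≤ d. -/
lemma geom_aux {S : Type*} [CommRing S] (d : ℕ) (u : ℕ → S)
    (hu : ∀ a b, a < b → b < d → u a * u (b + 1) = u (a + 1) * u b) :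
    ∀ k, 1 ≤ k → k ≤ d → u 0 ^ (k - 1) * u k = u 1 ^ k := by
  intro k
  induction k with
  | zero => omega
  | succ n ih =>
    intro _ hk
    rcases Nat.eq_zero_or_pos n with hn | hn
    · subst hn; simp
    · have h0 := hu 0 n hn (by omega)
      have ihn := ih hn (by omega)
      have hn1 : n - 1 + 1 = n := by omega
      have hp : u 0 ^ n = u 0 ^ (n - 1) * u 0 := by
        conv_lhs => rw [← hn1]
        rw [pow_succ]
      calc u 0 ^ (n + 1 - 1) * u (n + 1)
          = u 0 ^ (n - 1) * (u 0 * u (n + 1)) := by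
            rw [Nat.add_sub_cancel, hp]; ring
        _ = u 0 ^ (n - 1) * (u 1 * u n) := by rw [h0]
        _ = u 1 * (u 0 ^ (n - 1) * u n) := by ring
        _ = u 1 * u 1 ^ n := by rw [ihn]
        _ = u 1 ^ (n + 1) := by rw [pow_succ]; ring

/-- The reversed version: u_d^{k-1} u_{d-k} = u_{d-1}^k for 1 ≤ k ≤ d. -/
lemma geom_aux_rev {S : Type*} [CommRing S] (d : ℕ) (u : ℕ → S)
    (hu : ∀ a b, a < b → b < d → u a * u (b + 1) = u (a + 1) * u b) :
    ∀ k, 1 ≤ k → k ≤ d → u d ^ (k - 1) * u (d - k) = u (d - 1) ^ k := by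
  have h := geom_aux d (fun j => u (d - j)) ?_
  · intro k hk hkd
    have := h k hk hkd
    simpa using this
  · intro a b hab hbd
    have h2 := hu (d - b - 1) (d - a - 1) (by omega) (by omega)
    rw [show d - a - 1 + 1 = d - a from by omega,
        show d - b - 1 + 1 = d - b from by omega] at h2
    simp only [show d - (b + 1) = d - b - 1 from by omega,
        show d - (a + 1) = d - a - 1 from by omega]
    linear_combination h2

/-- For d ≥ 1, x_0^d y_d^d ≡ x_1^d y_{d−1}^d and x_d^d y_0^d ≡ x_{d−1}^d y_1^d modulo
    J_d = (S_d ∪ T_d ∪ {x_0 y_d − x_d y_0}). -/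
theorem pow_congr_mod_Jd {R : Type*} [CommRing R] (d : ℕ) (hd : 1 ≤ d) (x y : ℕ → R) :
    x 0 ^ d * y d ^ d - x 1 ^ d * y (d - 1) ^ d ∈
        Ideal.span (catMinors x d ∪ catMinors y d ∪ {x 0 * y d - x d * y 0}) ∧
      x d ^ d * y 0 ^ d - x (d - 1) ^ d * y 1 ^ d ∈
        Ideal.span (catMinors x d ∪ catMinors y d ∪ {x 0 * y d - x d * y 0}) := by
  set I := Ideal.span (catMinors x d ∪ catMinors y d ∪ {x 0 * y d - x d * y 0}) with hI
  set X : ℕ → R ⧸ I := fun a => Ideal.Quotient.mk I (x a) with hXdef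
  set Y : ℕ → R ⧸ I := fun a => Ideal.Quotient.mk I (y a) with hYdef
  have hX : ∀ a b, a < b → b < d → X a * X (b + 1) = X (a + 1) * X b := by
    intro a b hab hbd
    simp only [hXdef, ← map_mul]
    rw [Ideal.Quotient.eq]
    exact Ideal.subset_span (Or.inl (Or.inl ⟨a, b, hab, hbd, rfl⟩))
  have hY : ∀ a b, a < b → b < d → Y a * Y (b + 1) = Y (a + 1) * Y b := by
    intro a b hab hbd
    simp only [hYdef, ← map_mul]
    rw [Ideal.Quotient.eq]
    exact Ideal.subset_span (Or.inl (Or.inr ⟨a, b, hab, hbd, rfl⟩))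
  have h3 : X 0 * Y d = X d * Y 0 := by
    simp only [hXdef, hYdef, ← map_mul]
    rw [Ideal.Quotient.eq]
    exact Ideal.subset_span (Or.inr rfl)
  have gx := geom_aux d X hX d hd le_rfl
  have gx2 := geom_aux_rev d X hX d hd le_rfl
  have gy := geom_aux d Y hY d hd le_rfl
  have gy2 := geom_aux_rev d Y hY d hd le_rfl
  rw [Nat.sub_self] at gx2 gy2
  obtain ⟨e, rfl⟩ : ∃ e, d = e + 1 := ⟨d - 1, by omega⟩
  rw [Nat.add_sub_cancel] at gx gx2 gy gy2 ⊢
  constructor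
  · rw [← Ideal.Quotient.eq]
    simp only [map_sub, map_mul, map_pow, ← hXdef, ← hYdef, ← hI]
    linear_combination (X 0 ^ e * Y (e + 1) ^ e) * h3 + (Y (e + 1) ^ e * Y 0) * gx
      + (X 1 ^ (e + 1)) * gy2
  · rw [← Ideal.Quotient.eq]
    simp only [map_sub, map_mul, map_pow, ← hXdef, ← hYdef, ← hI]
    linear_combination (-(X (e + 1) ^ e * Y 0 ^ e)) * h3 + (Y 0 ^ e * Y (e + 1)) * gx2
      + (X e ^ (e + 1)) * gy
end

section
/- For all k with 0 ≤ k ≤ d−1, the congruence x_0^{d−1} x_d ≡ x_1^k x_{d−k} x_0^{d−k−1} (mod (S_d)) holds, i.e. x_0^{d−1} x_d − x_1^k x_{d−k} x_0^{d−k−1} belongs to the ideal generated by S_d. -/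
/-- For 0 ≤ k ≤ d−1, x_0^{d−1} x_d ≡ x_1^k x_{d−k} x_0^{d−k−1} (mod (S_d)). -/
theorem pow_congr_mod_Sd {R : Type*} [CommRing R] (d : ℕ) (hd : 1 ≤ d) (x : ℕ → R)
    (k : ℕ) (hk : k ≤ d - 1) :
    x 0 ^ (d - 1) * x d - x 1 ^ k * x (d - k) * x 0 ^ (d - k - 1) ∈
      Ideal.span (catMinors x d) := by
  induction k with
  | zero => simp [mul_comm]
  | succ k ih =>
    have ih' := ih (le_trans (Nat.le_succ k) hk)
    have hm : x 0 * x (d - k - 1 + 1) - x 1 * x (d - k - 1) ∈ Ideal.span (catMinors x d) := by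
      apply Ideal.subset_span
      exact ⟨0, d - k - 1, by omega, by omega, rfl⟩
    have h1 : d - k - 1 + 1 = d - k := by omega
    rw [h1] at hm
    have key : x 0 ^ (d-1) * x d - x 1 ^ (k+1) * x (d-(k+1)) * x 0 ^ (d-(k+1)-1)
        = (x 0 ^ (d-1) * x d - x 1 ^ k * x (d-k) * x 0 ^ (d-k-1))
          + x 1 ^ k * x 0 ^ (d-k-2) * (x 0 * x (d-k) - x 1 * x (d-k-1)) := by
      have e2 : d - (k+1) = d - k - 1 := by omega
      have e3 : d - (k+1) - 1 = d - k - 2 := by omega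
      have ep : x 0 ^ (d - k - 1) = x 0 ^ (d - k - 2) * x 0 := by
        rw [show d - k - 1 = (d - k - 2) + 1 from by omega, pow_succ]
      rw [e3, e2, ep, pow_succ]
      ring
    rw [key]
    exact Ideal.add_mem _ ih' (Ideal.mul_mem_left _ _ hm)
end

section
/- The congruence x_0^{d−1} x_d ≡ x_1^d (mod (S_d)) holds, i.e. x_0^{d−1} x_d − x_1^d belongs to the ideal generated by S_d. -/
/-- x_0^{d−1} x_d ≡ x_1^d (mod (S_d)). -/
theorem pow_congr_mod_Sd' {R : Type*} [CommRing R] (d : ℕ) (hd : 1 ≤ d) (x : ℕ → R) :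
    x 0 ^ (d - 1) * x d - x 1 ^ d ∈ Ideal.span (catMinors x d) := by
  induction d with
  | zero => omega
  | succ n ih =>
    rcases Nat.eq_zero_or_pos n with h0 | h1
    · subst h0; simp
    · obtain ⟨m, rfl⟩ : ∃ m, n = m + 1 := ⟨n - 1, by omega⟩
      have IH := ih h1
      simp only [Nat.add_sub_cancel] at IH ⊢
      have hmono : Ideal.span (catMinors x (m + 1)) ≤ Ideal.span (catMinors x (m + 2)) := by
        apply Ideal.span_mono
        rintro f ⟨a, b, hab, hb, hf⟩
        exact ⟨a, b, hab, hb.trans (Nat.lt_succ_self _), hf⟩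
      have hmem : x 0 * x (m + 2) - x 1 * x (m + 1) ∈ catMinors x (m + 2) :=
        ⟨0, m + 1, by omega, by omega, rfl⟩
      have heq : x 0 ^ (m + 1) * x (m + 2) - x 1 ^ (m + 2) =
          x 0 ^ m * (x 0 * x (m + 2) - x 1 * x (m + 1)) +
            x 1 * (x 0 ^ m * x (m + 1) - x 1 ^ (m + 1)) := by ring
      rw [heq]
      exact Ideal.add_mem _ (Ideal.mul_mem_left _ _ (Ideal.subset_span hmem))
        (Ideal.mul_mem_left _ _ (hmono IH))
end

section
/- Let p be a prime and suppose R is an integral domain of characteristic p. Then for every positive integer h, taking c = d = p^h, one has Rad(I_{p^h,p^h}) = Rad(J_{p^h}). -/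
section Aux

variable {D : Type*} [CommRing D] [IsDomain D]

/-- Hankel-type relations propagate: move k steps. -/
lemma hank_move (d : ℕ) (u : ℕ → D)
    (hu : ∀ a b : ℕ, a < b → b < d → u a * u (b + 1) = u (a + 1) * u b) :
    ∀ k a b : ℕ, a + k ≤ b → b + k ≤ d → u a * u (b + k) = u (a + k) * u b := by
  intro k
  induction k with
  | zero => intro a b _ _; rfl
  | succ k ih =>
    intro a b h1 h2
    have step : u a * u (b + k + 1) = u (a + 1) * u (b + k) :=
      hu a (b + k) (by omega) (by omega)
    have h3 : u (a + 1) * u (b + k) = u (a + 1 + k) * u b := ih (a + 1) b (by omega) (by omega)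
    have e : a + 1 + k = a + (k + 1) := by omega
    rw [show b + (k + 1) = b + k + 1 from rfl, step, h3, e]

/-- If `u 0 = 0` then all `u a` with `a < d` vanish. -/
lemma hank_zero (d : ℕ) (u : ℕ → D)
    (hu : ∀ a b : ℕ, a < b → b < d → u a * u (b + 1) = u (a + 1) * u b)
    (h0 : u 0 = 0) : ∀ a, a < d → u a = 0 := by
  intro a
  induction a using Nat.strong_induction_on with
  | _ a ih =>
    intro had
    rcases Nat.eq_zero_or_pos a with rfl | ha
    · exact h0
    · by_cases hle : a + a ≤ d
      · have h1 := hank_move d u hu a 0 a (by omega) (by omega)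
        rw [h0, zero_mul, Nat.zero_add] at h1
        exact mul_self_eq_zero.mp h1.symm
      · set k := d - a with hk
        have h2 := hank_move d u hu k (a - k) a (by omega) (by omega)
        have hz : u (a - k) = 0 := ih (a - k) (by omega) (by omega)
        rw [hz, zero_mul, show a - k + k = a from by omega] at h2
        exact mul_self_eq_zero.mp h2.symm
  
/-- Geometric-power identity from Hankel relations, in a domain. -/
lemma hank_pow (n : ℕ) (u : ℕ → D)
    (hu : ∀ a b : ℕ, a < b → b < n + 1 → u a * u (b + 1) = u (a + 1) * u b) :
    ∀ a b : ℕ, a + b = n + 1 → u a ^ (n + 1) = u 0 ^ b * u (n + 1) ^ a := by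
  have hx1 : ∀ m, m + 1 ≤ n + 1 → u 0 ^ m * u (m + 1) = u 1 ^ (m + 1) := by
    intro m
    induction m with
    | zero => intro _; simp
    | succ m ih =>
      intro hm
      have h1 : u 0 * u (m + 1 + 1) = u 1 * u (m + 1) := hu 0 (m + 1) (by omega) (by omega)
      have ihm := ih (by omega)
      calc u 0 ^ (m + 1) * u (m + 1 + 1)
          = u 0 ^ m * (u 0 * u (m + 1 + 1)) := by ring
        _ = u 0 ^ m * (u 1 * u (m + 1)) := by rw [h1]
        _ = u 1 * (u 0 ^ m * u (m + 1)) := by ring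
        _ = u 1 * u 1 ^ (m + 1) := by rw [ihm]
        _ = u 1 ^ (m + 1 + 1) := by ring
  intro a b hab
  rcases a with _ | m
  · simp at hab; subst hab; simp
  · by_cases h0 : u 0 = 0
    · rcases Nat.eq_zero_or_pos b with rfl | hb
      · have : m + 1 = n + 1 := by omega
        rw [this]; simp
      · have hz : u (m + 1) = 0 :=
          hank_zero (n + 1) u hu h0 (m + 1) (by omega)
        rw [hz, h0, zero_pow (by omega : n + 1 ≠ 0), zero_pow (by omega : b ≠ 0), zero_mul]
    · obtain rfl : n = m + b := by omega
      have e1 := hx1 m (by omega)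
      have e2 := hx1 (m + b) (by omega)
      apply mul_left_cancel₀ (pow_ne_zero (m * (m + b + 1)) h0)
      calc u 0 ^ (m * (m + b + 1)) * u (m + 1) ^ (m + b + 1)
          = (u 0 ^ m * u (m + 1)) ^ (m + b + 1) := by rw [mul_pow, ← pow_mul]
        _ = (u 1 ^ (m + 1)) ^ (m + b + 1) := by rw [e1]
        _ = (u 1 ^ (m + b + 1)) ^ (m + 1) := by rw [← pow_mul, ← pow_mul, Nat.mul_comm]
        _ = (u 0 ^ (m + b) * u (m + b + 1)) ^ (m + 1) := by rw [e2]
        _ = u 0 ^ ((m + b) * (m + 1)) * u (m + b + 1) ^ (m + 1) := by rw [mul_pow, ← pow_mul]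
        _ = u 0 ^ (m * (m + b + 1) + b) * u (m + b + 1) ^ (m + 1) := by
            congr 2; ring
        _ = u 0 ^ (m * (m + b + 1)) * (u 0 ^ b * u (m + b + 1) ^ (m + 1)) := by
            rw [pow_add]; ring

end Aux

/-- In characteristic p, Rad(I_{p^h,p^h}) = Rad(J_{p^h}) for a domain R. -/
theorem radical_scroll_eq_radical_Jd {R : Type*} [CommRing R] [IsDomain R]
    (p : ℕ) (hp : p.Prime) [CharP R p] (h : ℕ) (hh : 1 ≤ h) (x y : ℕ → R) :
    (scrollIdeal x y (p ^ h) (p ^ h)).radical =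
      (Ideal.span (catMinors x (p ^ h) ∪ catMinors y (p ^ h) ∪
        {x 0 * y (p ^ h) - x (p ^ h) * y 0})).radical := by
  haveI : Fact p.Prime := ⟨hp⟩
  set d := p ^ h with hd
  have hd0 : 0 < d := pow_pos hp.pos h
  obtain ⟨n, hn⟩ : ∃ n, d = n + 1 := ⟨d - 1, by omega⟩
  set K : Ideal R := Ideal.span (catMinors x d ∪ catMinors y d ∪
    {x 0 * y d - x d * y 0}) with hK
  apply le_antisymm
  · -- Rad I ≤ Rad K
    have hIK : scrollIdeal x y d d ≤ K.radical := by
      rw [scrollIdeal, Ideal.span_le]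
      rintro f ((hf | hf) | hf)
      · exact Ideal.le_radical (Ideal.subset_span (Or.inl (Or.inl hf)))
      · exact Ideal.le_radical (Ideal.subset_span (Or.inl (Or.inr hf)))
      · -- mixed minor
        obtain ⟨a, b, hac, hbd, rfl⟩ := hf
        apply Ideal.mem_radical_of_pow_mem (m := d)
        rw [hd, sub_pow_char_pow, mul_pow, mul_pow, ← hd]
        rw [Ideal.radical_eq_sInf, Ideal.mem_sInf]
        rintro P ⟨hKP, hPp⟩
        haveI := hPp
        set π := Ideal.Quotient.mk P with hπ
        have hmem : ∀ f ∈ (catMinors x d ∪ catMinors y d ∪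
            {x 0 * y d - x d * y 0} : Set R), π f = 0 := by
          intro f hf
          exact Ideal.Quotient.eq_zero_iff_mem.mpr (hKP (Ideal.subset_span hf))
        set u : ℕ → R ⧸ P := fun i => π (x i) with hu'
        set v : ℕ → R ⧸ P := fun i => π (y i) with hv'
        have hu : ∀ a b : ℕ, a < b → b < n + 1 → u a * u (b + 1) = u (a + 1) * u b := by
          intro a b h1 h2
          have := hmem _ (Or.inl (Or.inl ⟨a, b, h1, by omega, rfl⟩))
          rw [map_sub, map_mul, map_mul, sub_eq_zero] at this
          exact this
        have hv : ∀ a b : ℕ, a < b → b < n + 1 → v a * v (b + 1) = v (a + 1) * v b := by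
          intro a b h1 h2
          have := hmem _ (Or.inl (Or.inr ⟨a, b, h1, by omega, rfl⟩))
          rw [map_sub, map_mul, map_mul, sub_eq_zero] at this
          exact this
        have hm : u 0 * v d = u d * v 0 := by
          have := hmem _ (Or.inr rfl)
          rw [map_sub, map_mul, map_mul, sub_eq_zero] at this
          exact this
        rw [← Ideal.Quotient.eq_zero_iff_mem, map_sub, map_mul, map_mul, map_pow, map_pow,
          map_pow, map_pow, sub_eq_zero]
        show u a ^ d * v (b + 1) ^ d = u (a + 1) ^ d * v b ^ d
        rw [hn] at hac hbd ⊢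
        have Ha := hank_pow n u hu a (n + 1 - a) (by omega)
        have Ha' := hank_pow n u hu (a + 1) (n + 1 - (a + 1)) (by omega)
        have Hb := hank_pow n v hv b (n + 1 - b) (by omega)
        have Hb' := hank_pow n v hv (b + 1) (n + 1 - (b + 1)) (by omega)
        rw [Ha, Ha', Hb, Hb']
        rw [show n + 1 - a = (n + 1 - (a + 1)) + 1 from by omega,
          show n + 1 - b = (n + 1 - (b + 1)) + 1 from by omega]
        have hm' : u 0 * v (n + 1) = u (n + 1) * v 0 := by rw [← hn]; exact hm
        linear_combination
          (u 0 ^ (n + 1 - (a + 1)) * u (n + 1) ^ a * v 0 ^ (n + 1 - (b + 1)) *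
            v (n + 1) ^ b) * hm'
    calc (scrollIdeal x y d d).radical ≤ K.radical.radical := Ideal.radical_mono hIK
      _ = K.radical := K.radical_idem
  · -- Rad K ≤ Rad I
    apply Ideal.radical_mono
    rw [hK, Ideal.span_le]
    have tel : ∀ k, k ≤ d → x 0 * y d - x k * y (d - k) ∈ scrollIdeal x y d d := by
      intro k
      induction k with
      | zero => intro _; simp
      | succ k ih =>
        intro hk
        have h1 := ih (by omega)
        have h2 : x k * y (d - k) - x (k + 1) * y (d - k - 1) ∈ scrollIdeal x y d d := by
          apply Ideal.subset_span
          refine Or.inr ⟨k, d - k - 1, by omega, by omega, ?_⟩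
          rw [show d - k - 1 + 1 = d - k from by omega]
        have := Ideal.add_mem _ h1 h2
        have e : x 0 * y d - x k * y (d - k) + (x k * y (d - k) - x (k + 1) * y (d - k - 1))
            = x 0 * y d - x (k + 1) * y (d - (k + 1)) := by
          rw [show d - (k + 1) = d - k - 1 from by omega]; ring
        rwa [e] at this
    rintro f ((hf | hf) | hf)
    · exact Ideal.subset_span (Or.inl (Or.inl hf))
    · exact Ideal.subset_span (Or.inl (Or.inr hf))
    · rw [hf]
      have := tel d le_rfl
      simpa using this
end
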